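/- arXiv:0706.1918 — 8 statements merged into one kernel-verified Lean document; each statement's English description precedes it below -/
import Mathlib

section
/- Let f₁, …, fₙ ∈ K^d span K^d as a K-vector space and let u₁, …, uₙ ∈ ℤ. Then there exist a d-element subset τ ⊆ {1,…,n} such that (f_j)_{j∈τ} is a K-basis of K^d, and integers (a_j)_{j∈τ}, such that the R-submodule of K^d generated by z^{-u₁}f₁, …, z^{-uₙ}fₙ equals the R-submodule generated by the d elements z^{-a_j}f_j with j ∈ τ. (Every lattice in a membrane lies in one of the apartments spanned by d linearly independent generating vectors.) -/
/-! Write gᵢ = z^{-uᵢ} fᵢ. Given a K-linear relation ∑ cⱼ gⱼ = 0, divide it by a coefficient cᵢ of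
minimal valuation: all cⱼ / cᵢ lie in R, so gᵢ is an R-combination of the other generators and can
be dropped without changing their R-span (nor, since R spans K, their K-span). Repeating this
leaves a K-linearly independent family spanning K^d, i.e. d of the gⱼ, and one can take a = u. -/

noncomputable section
set_option synthInstance.maxHeartbeats 1000000
set_option maxHeartbeats 1000000

abbrev K := LaurentSeries ℂ

abbrev Rring : Subring K := (HahnSeries.ofPowerSeries ℤ ℂ).range

def z : K := HahnSeries.single 1 1

open Submodule

section

variable {F V ι : Type*} [Field F] [AddCommGroup V] [Module F V]

theorem span_image_smul_eq_of_ne_zero {w : ι → F} (hw : ∀ i, w i ≠ 0) (f : ι → V) (s : Set ι) :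
    span F ((fun i => w i • f i) '' s) = span F (f '' s) := by
  refine le_antisymm (span_le.2 <| Set.image_subset_iff.2 fun i hi => ?_)
    (span_le.2 <| Set.image_subset_iff.2 fun i hi => ?_)
  · exact smul_mem _ _ (subset_span (Set.mem_image_of_mem f hi))
  · rw [Set.mem_preimage, ← inv_smul_smul₀ (hw i) (f i)]
    exact smul_mem _ _ (subset_span (Set.mem_image_of_mem (fun i => w i • f i) hi))

theorem linearIndepOn_smul_iff_of_ne_zero {w : ι → F} (hw : ∀ i, w i ≠ 0) {f : ι → V} {s : Set ι} :
    LinearIndepOn F (fun i => w i • f i) s ↔ LinearIndepOn F f s :=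
  LinearIndependent.units_smul_iff (fun j : s => f j) (fun j => Units.mk0 (w j) (hw j))

theorem LinearIndepOn.finset_card_eq_finrank {f : ι → V} {t : Finset ι}
    (hli : LinearIndepOn F f t) (hspan : span F (f '' t) = ⊤) : t.card = Module.finrank F V := by
  rw [Module.finrank_eq_card_basis (Module.Basis.mk hli (by rw [← Set.image_eq_range, hspan]))]
  exact (Fintype.card_coe t).symm

namespace ValuationSubring

variable (A : ValuationSubring F)

theorem exists_mem_span_erase_of_not_linearIndepOn [DecidableEq ι] {g : ι → V} {s : Finset ι}
    (h : ¬LinearIndepOn F g s) : ∃ i ∈ s, g i ∈ span A.toSubring (g '' ↑(s.erase i)) := by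
  obtain ⟨c, hsum, j₀, hj₀, hcj₀⟩ := not_linearIndepOn_finset_iff.mp h
  obtain ⟨i, hi, hmax⟩ := s.exists_max_image (fun j => A.valuation (c j)) ⟨j₀, hj₀⟩
  have hci : c i ≠ 0 := fun h0 => hcj₀ (by simpa [h0] using hmax j₀ hj₀)
  have hcoef : ∀ j ∈ s, (c i)⁻¹ * c j ∈ A := fun j hj => by
    obtain ⟨a, ha⟩ := (A.valuation_le_iff _ _).mp (hmax j hj)
    rw [← ha, mul_left_comm, inv_mul_cancel₀ hci, mul_one]
    exact a.2
  have hgi : g i = -∑ j ∈ s.erase i, ((c i)⁻¹ * c j) • g j := by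
    rw [← Finset.add_sum_erase s _ hi] at hsum
    simp only [mul_smul, ← Finset.smul_sum, ← smul_neg, ← eq_neg_of_add_eq_zero_left hsum,
      inv_smul_smul₀ hci]
  refine ⟨i, hi, hgi ▸ Submodule.neg_mem _ (Submodule.sum_mem _ fun j hj => ?_)⟩
  exact smul_mem _ (⟨_, hcoef j (Finset.mem_of_mem_erase hj)⟩ : A.toSubring)
    (subset_span (Set.mem_image_of_mem g hj))

theorem exists_subset_linearIndepOn_span_eq (g : ι → V) (s : Finset ι) :
    ∃ t ⊆ s, LinearIndepOn F g t ∧ span A.toSubring (g '' t) = span A.toSubring (g '' s) := by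
  classical
  induction s using Finset.strongInduction with
  | H s ih =>
    by_cases hs : LinearIndepOn F g s
    · exact ⟨s, subset_rfl, hs, rfl⟩
    obtain ⟨i, hi, hgi⟩ := A.exists_mem_span_erase_of_not_linearIndepOn hs
    obtain ⟨t, hts, ht, hspan⟩ := ih _ (Finset.erase_ssubset hi)
    have himage : g '' s = insert (g i) (g '' ↑(s.erase i)) := by
      rw [← Set.image_insert_eq, ← Finset.coe_insert, Finset.insert_erase hi]
    exact ⟨t, hts.trans (s.erase_subset i), ht, by rw [hspan, himage, span_insert_eq_span hgi]⟩

end ValuationSubring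
end

theorem Rring_eq_valuationSubring : Rring = (Valued.v (R := K)).valuationSubring.toSubring := by
  ext x
  rw [ValuationSubring.mem_toSubring, Valuation.mem_valuationSubring_iff,
    LaurentSeries.val_le_one_iff_eq_coe]
  rfl

lemma z_ne_zero : z ≠ 0 := HahnSeries.single_ne_zero one_ne_zero

theorem membrane_covered_by_apartments {d n : ℕ} (f : Fin n → (Fin d → K))
    (hspan : Submodule.span K (Set.range f) = ⊤) (u : Fin n → ℤ) :
    ∃ τ : Finset (Fin n), τ.card = d ∧
      LinearIndependent K (fun j : τ => f j) ∧
      Submodule.span K (f '' τ) = ⊤ ∧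
      ∃ a : Fin n → ℤ,
        Submodule.span Rring (Set.range fun i => z ^ (-(u i)) • f i) =
          Submodule.span Rring ((fun j => z ^ (-(a j)) • f j) '' τ) := by
  have hz (i : Fin n) : z ^ (-(u i)) ≠ 0 := zpow_ne_zero _ z_ne_zero
  obtain ⟨τ, -, hli, hR⟩ := (Valued.v (R := K)).valuationSubring.exists_subset_linearIndepOn_span_eq
    (fun i => z ^ (-(u i)) • f i) Finset.univ
  rw [Finset.coe_univ, Set.image_univ, ← Rring_eq_valuationSubring] at hR
  have hK : span K (f '' τ) = ⊤ := by
    rw [← span_image_smul_eq_of_ne_zero hz, ← span_span_of_tower Rring, hR, span_span_of_tower,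
      ← Set.image_univ, span_image_smul_eq_of_ne_zero hz, Set.image_univ, hspan]
  have hliK : LinearIndepOn K f τ := (linearIndepOn_smul_iff_of_ne_zero hz).mp hli
  exact ⟨τ, by rw [hliK.finset_card_eq_finrank hK, Module.finrank_fin_fun], hliK, hK, u, hR.symm⟩
end
end

section
/- Let P ⊆ ℝ^d be a nonempty closed tropically convex set and let x ∈ ℝ^d. Then the set Q = {w ∈ P : w_i ≥ x_i for all i} is nonempty and has a least element π_P(x), i.e. π_P(x) ∈ Q and π_P(x) ≤ w coordinatewise for every w ∈ Q. Moreover, π_P(x) minimizes the δ-distance from x to P: δ(x, π_P(x)) ≤ δ(x, w) for every w ∈ P. -/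
/- For a nonempty closed tropically convex set P ⊆ ℝ^d and x ∈ ℝ^d, the set
   Q = {w ∈ P : w ≥ x} is nonempty with a least element π_P(x), and π_P(x) minimizes
   the generalized Hilbert distance δ(x,·) = max_{i<j} |x_i + y_j − x_j − y_i| over P. -/

noncomputable section

/-- Tropical (min-plus) convexity of a subset of `ℝ^d`. -/
def TropicallyConvex {d : ℕ} (P : Set (Fin d → ℝ)) : Prop :=
  ∀ x ∈ P, ∀ y ∈ P, ∀ lam mu : ℝ, (fun i => min (lam + x i) (mu + y i)) ∈ P

/-- The generalized Hilbert metric `δ(x,y) = max_{i<j} |x_i + y_j − x_j − y_i|`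
(taking the supremum over all pairs, which agrees with the maximum over `i < j`). -/
def tropDist {d : ℕ} (x y : Fin d → ℝ) : ℝ :=
  ⨆ p : Fin d × Fin d, |x p.1 + y p.2 - x p.2 - y p.1|

lemma min_mem {d : ℕ} {P : Set (Fin d → ℝ)} (hconv : TropicallyConvex P)
    {p q : Fin d → ℝ} (hp : p ∈ P) (hq : q ∈ P) :
    (fun i => min (p i) (q i)) ∈ P := by
  simpa using hconv p hp q hq 0 0

lemma inf'_mem {d : ℕ} {P : Set (Fin d → ℝ)} (hconv : TropicallyConvex P)
    {ι : Type*} (s : Finset ι) (hs : s.Nonempty) (f : ι → Fin d → ℝ)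
    (hf : ∀ i ∈ s, f i ∈ P) :
    (fun j => s.inf' hs (fun i => f i j)) ∈ P := by
  induction hs using Finset.Nonempty.cons_induction with
  | singleton a => simpa using hf a (by simp)
  | cons a s ha hs ih =>
      have h1 : f a ∈ P := hf a (by simp)
      have h2 := ih (fun i hi => hf i (by simp [hi]))
      simp only [Finset.inf'_cons (H := hs)]
      exact min_mem hconv h1 h2

theorem projection_onto_tropically_convex_set {d : ℕ} (P : Set (Fin d → ℝ))
    (hne : P.Nonempty) (hcl : IsClosed P) (hconv : TropicallyConvex P) (x : Fin d → ℝ) :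
    ({w ∈ P | x ≤ w}).Nonempty ∧
    ∃ y : Fin d → ℝ, IsLeast {w ∈ P | x ≤ w} y ∧
      ∀ w ∈ P, tropDist x y ≤ tropDist x w := by
  obtain ⟨p, hp⟩ := hne
  obtain h0 | h0 := isEmpty_or_nonempty (Fin d)
  · refine ⟨⟨p, hp, fun i => isEmptyElim i⟩, p,
      ⟨⟨hp, fun i => isEmptyElim i⟩, fun w _ i => isEmptyElim i⟩, fun w _ => ?_⟩
    have : IsEmpty (Fin d × Fin d) := inferInstance
    simp [tropDist, ciSup_of_empty]
  · have hbdd : ∀ (g : Fin d → ℝ), BddAbove (Set.range g) :=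
      fun g => (Set.finite_range g).bddAbove
    set Q := {w ∈ P | x ≤ w} with hQ
    -- translate p upward into Q
    have shift_mem : ∀ w ∈ P, ∀ lam : ℝ, (fun i => lam + w i) ∈ P := by
      intro w hw lam
      simpa using hconv w hw w hw lam lam
    have shiftQ : ∀ w ∈ P, (fun i => (⨆ k, (x k - w k)) + w i) ∈ Q := by
      intro w hw
      refine ⟨shift_mem w hw _, fun i => ?_⟩
      have := le_ciSup (hbdd fun k => x k - w k) i
      simpa using by linarith
    have hQne : Q.Nonempty := ⟨_, shiftQ p hp⟩
    -- the projection
    set y : Fin d → ℝ := fun i => sInf ((fun w => w i) '' Q) with hy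
    have hSne : ∀ i, ((fun w : Fin d → ℝ => w i) '' Q).Nonempty :=
      fun i => hQne.image _
    have hSbdd : ∀ i, BddBelow ((fun w : Fin d → ℝ => w i) '' Q) := by
      intro i
      exact ⟨x i, by rintro a ⟨w, hw, rfl⟩; exact hw.2 i⟩
    have hxy : x ≤ y := by
      intro i
      exact le_csInf (hSne i) (by rintro a ⟨w, hw, rfl⟩; exact hw.2 i)
    have hylb : ∀ w ∈ Q, y ≤ w := by
      intro w hw i
      exact csInf_le (hSbdd i) ⟨w, hw, rfl⟩
    have hyP : y ∈ P := by
      have : y ∈ closure P := by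
        rw [Metric.mem_closure_iff]
        intro ε hε
        have : ∀ i : Fin d, ∃ w, w ∈ Q ∧ w i < y i + ε := by
          intro i
          obtain ⟨a, ⟨w, hw, rfl⟩, ha⟩ :=
            exists_lt_of_csInf_lt (hSne i) (lt_add_of_pos_right (y i) hε)
          exact ⟨w, hw, ha⟩
        choose g hg1 hg2 using this
        set w : Fin d → ℝ := fun j => Finset.univ.inf' Finset.univ_nonempty (fun i => g i j)
          with hw
        have hwP : w ∈ P :=
          inf'_mem hconv Finset.univ Finset.univ_nonempty g (fun i _ => (hg1 i).1)
        refine ⟨w, hwP, ?_⟩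
        rw [dist_pi_lt_iff hε]
        intro j
        have h1 : y j ≤ w j :=
          Finset.le_inf' _ _ (fun i _ => hylb (g i) (hg1 i) j)
        have h2 : w j < y j + ε :=
          lt_of_le_of_lt (Finset.inf'_le _ (Finset.mem_univ j)) (hg2 j)
        rw [Real.dist_eq, abs_lt]
        constructor <;> linarith
      rwa [hcl.closure_eq] at this
    refine ⟨hQne, y, ⟨⟨hyP, hxy⟩, hylb⟩, ?_⟩
    intro w hw
    set lam := ⨆ k, (x k - w k) with hlam
    have hw' : (fun i => lam + w i) ∈ Q := shiftQ w hw
    have hyw' : y ≤ fun i => lam + w i := hylb _ hw'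
    have key : ∀ j : Fin d, lam + w j - x j ≤ tropDist x w := by
      intro j
      have : lam ≤ tropDist x w - w j + x j := by
        apply ciSup_le
        intro k
        have h1 : x k + w j - x j - w k ≤ |x k + w j - x j - w k| := le_abs_self _
        have h2 : |x k + w j - x j - w k| ≤ tropDist x w := by
          have := le_ciSup ((Set.finite_range
            (fun p : Fin d × Fin d => |x p.1 + w p.2 - x p.2 - w p.1|)).bddAbove) (k, j)
          simpa [tropDist] using this
        linarith
      linarith
    apply ciSup_le
    rintro ⟨i, j⟩
    have hyi : x i ≤ y i := hxy i
    have hyj : x j ≤ y j := hxy j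
    have hyi' : y i ≤ lam + w i := hyw' i
    have hyj' : y j ≤ lam + w j := hyw' j
    have ki := key i
    have kj := key j
    rw [abs_le]
    constructor <;> simp only [] <;> linarith
end
end

section
/- Let v₁, …, vₙ ∈ ℝ^d and let P = tconv(v₁, …, vₙ) be their tropical convex hull. For x ∈ ℝ^d define y ∈ ℝ^d by y_i = min_{k ∈ {1,…,n}} max_{j ∈ {1,…,d}} (v_{ki} − v_{kj} + x_j). Then y ∈ P, y ≥ x coordinatewise, and y ≤ w coordinatewise for every w ∈ P with w ≥ x; that is, y is the nearest point projection π_P(x) of x onto P. -/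
/- Projection formula onto a tropical polytope P = tconv(v₁,…,vₙ) ⊆ ℝ^d:
   y_i = min_k max_j (v_{ki} − v_{kj} + x_j) is the least point of P lying above x. -/

noncomputable section

/-- The tropical convex hull of the points `v 0, …, v (n-1)` in `ℝ^d` (for `n > 0`):
all coordinatewise minima `i ↦ min_k (lam k + v k i)`. -/
def tropConvexHull {n d : ℕ} (hn : 0 < n) (v : Fin n → Fin d → ℝ) : Set (Fin d → ℝ) :=
  {w | ∃ lam : Fin n → ℝ,
    w = fun i => Finset.univ.inf' (Finset.univ_nonempty_iff.mpr ⟨⟨0, hn⟩⟩)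
      (fun k => lam k + v k i)}

theorem projection_onto_tropical_polytope {n d : ℕ} (hn : 0 < n) (hd : 0 < d)
    (v : Fin n → Fin d → ℝ) (x : Fin d → ℝ) :
    (fun i => Finset.univ.inf' (Finset.univ_nonempty_iff.mpr ⟨⟨0, hn⟩⟩)
        (fun k => Finset.univ.sup' (Finset.univ_nonempty_iff.mpr ⟨⟨0, hd⟩⟩)
          (fun j => v k i - v k j + x j))) ∈ tropConvexHull hn v ∧
    x ≤ (fun i => Finset.univ.inf' (Finset.univ_nonempty_iff.mpr ⟨⟨0, hn⟩⟩)
        (fun k => Finset.univ.sup' (Finset.univ_nonempty_iff.mpr ⟨⟨0, hd⟩⟩)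
          (fun j => v k i - v k j + x j))) ∧
    ∀ w ∈ tropConvexHull hn v, x ≤ w →
      (fun i => Finset.univ.inf' (Finset.univ_nonempty_iff.mpr ⟨⟨0, hn⟩⟩)
        (fun k => Finset.univ.sup' (Finset.univ_nonempty_iff.mpr ⟨⟨0, hd⟩⟩)
          (fun j => v k i - v k j + x j))) ≤ w := by
  have hdne : (Finset.univ : Finset (Fin d)).Nonempty :=
    Finset.univ_nonempty_iff.mpr ⟨⟨0, hd⟩⟩
  have hnne : (Finset.univ : Finset (Fin n)).Nonempty :=
    Finset.univ_nonempty_iff.mpr ⟨⟨0, hn⟩⟩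
  refine ⟨⟨fun k => Finset.univ.sup' hdne (fun j => x j - v k j), ?_⟩, ?_, ?_⟩
  · funext i
    refine Finset.inf'_congr _ rfl (fun k _ => ?_)
    rw [Finset.sup'_add]
    exact Finset.sup'_congr hdne rfl (fun j _ => by ring)
  · intro i
    apply Finset.le_inf'
    intro k _
    exact Finset.le_sup'_of_le _ (Finset.mem_univ i) (by linarith)
  · rintro w ⟨mu, rfl⟩ hxw
    intro i
    apply Finset.le_inf'
    intro k _
    refine le_trans (Finset.inf'_le _ (Finset.mem_univ k)) ?_
    apply Finset.sup'_le
    intro j _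
    have := le_trans (hxw j) (Finset.inf'_le (f := fun k => mu k + v k j) (Finset.mem_univ k))
    linarith
end
end

section
/- Let d ≥ 2 and fix integers u_{ij} for all pairs i ≠ j in {1,…,d}, defining the cell C = {w ∈ ℝ^d : w_i − w_j ≤ u_{ij} for all i ≠ j}. Let x₀ ≤ x₁ ≤ ⋯ ≤ x_k be points of ℤ^d (coordinatewise order) with x_k ≤ x₀ + (1,1,…,1). If some convex combination w = Σ_{m=0}^{k} λ_m x_m with all λ_m > 0 and Σ λ_m = 1 lies in C, then every vertex x_m lies in C. (Every cell of a tropical lattice polytope contains the full simplex of the standard triangulation having any of its points in the relative interior.) -/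
/- Cells of tropical lattice polytopes are unions of simplices of the standard
   triangulation: if a chain x₀ ≤ ⋯ ≤ x_k of lattice points with x_k ≤ x₀ + (1,…,1)
   has a strictly positive convex combination lying in the cell
   C = {w : w_i − w_j ≤ u_{ij}} (integer bounds), then every x_m lies in C. -/

noncomputable section

theorem cell_contains_standard_simplex {d : ℕ} (hd : 2 ≤ d)
    (u : Fin d → Fin d → ℤ) (k : ℕ) (x : Fin (k + 1) → Fin d → ℤ)
    (hmono : Monotone x)
    (htop : ∀ i : Fin d, x (Fin.last k) i ≤ x 0 i + 1)
    (lam : Fin (k + 1) → ℝ) (hpos : ∀ m, 0 < lam m) (hsum : ∑ m, lam m = 1)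
    (hw : ∀ i j : Fin d, i ≠ j →
      (∑ m, lam m * (x m i : ℝ)) - (∑ m, lam m * (x m j : ℝ)) ≤ (u i j : ℝ)) :
    ∀ m : Fin (k + 1), ∀ i j : Fin d, i ≠ j → x m i - x m j ≤ u i j := by
  intro m i j hij
  have hub : ∀ (p : Fin (k+1)) (a : Fin d), x p a ≤ x 0 a + 1 := fun p a =>
    le_trans ((hmono (Fin.le_last p)) a) (htop a)
  have hlb : ∀ (p : Fin (k+1)) (a : Fin d), x 0 a ≤ x p a := fun p a =>
    (hmono (Fin.zero_le p)) a
  -- differences across the chain lie within 1 of each other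
  have key : ∀ p : Fin (k+1), x m i - x m j - 1 ≤ x p i - x p j := by
    intro p
    rcases le_total m p with h | h
    · have h1 : x m i ≤ x p i := (hmono h) i
      have h2 : x p j ≤ x 0 j + 1 := hub p j
      have h3 : x 0 j ≤ x m j := hlb m j
      omega
    · have h1 : x p j ≤ x m j := (hmono h) j
      have h2 : x m i ≤ x 0 i + 1 := hub m i
      have h3 : x 0 i ≤ x p i := hlb p i
      omega
  set c : ℝ := (x m i : ℝ) - (x m j : ℝ) with hc
  set D : Fin (k+1) → ℝ := fun p => (x p i : ℝ) - (x p j : ℝ) with hD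
  have hlow : ∀ p, c - 1 ≤ D p := by
    intro p
    have h := key p
    have h' : ((x m i - x m j - 1 : ℤ) : ℝ) ≤ ((x p i - x p j : ℤ) : ℝ) := by
      exact_mod_cast h
    push_cast at h'
    simp only [hc, hD]
    linarith
  have hW : (∑ p, lam p * (x p i : ℝ)) - (∑ p, lam p * (x p j : ℝ))
      = ∑ p, lam p * D p := by
    rw [← Finset.sum_sub_distrib]
    exact Finset.sum_congr rfl fun p _ => by simp only [hD]; ring
  have h1 : ∑ p : Fin (k+1), lam p * (c - 1) = c - 1 := by
    rw [← Finset.sum_mul, hsum, one_mul]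
  have h2 : lam m * (D m - (c - 1)) ≤ ∑ p, lam p * (D p - (c - 1)) :=
    Finset.single_le_sum (f := fun p => lam p * (D p - (c - 1)))
      (fun p _ => mul_nonneg (hpos p).le (by linarith [hlow p]))
      (Finset.mem_univ m)
  have hDm : D m = c := rfl
  have h3 : ∑ p, lam p * (D p - (c - 1)) = (∑ p, lam p * D p) - (c - 1) := by
    have he : ∀ p : Fin (k+1), lam p * (D p - (c - 1)) = lam p * D p - lam p * (c - 1) :=
      fun p => by ring
    simp_rw [he, Finset.sum_sub_distrib, h1]
  have h4 : c - 1 + lam m ≤ ∑ p, lam p * D p := by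
    rw [hDm] at h2
    have : lam m * (c - (c - 1)) = lam m := by ring
    rw [this, h3] at h2
    linarith
  have h5 : (∑ p, lam p * D p) ≤ (u i j : ℝ) := by rw [← hW]; exact hw i j hij
  have h6 : c - 1 < (u i j : ℝ) := by linarith [hpos m]
  have h7 : ((x m i - x m j - 1 : ℤ) : ℝ) < ((u i j : ℤ) : ℝ) := by
    push_cast
    simp only [hc] at h6
    linarith
  have h8 : x m i - x m j - 1 < u i j := by exact_mod_cast h7
  omega
end
end

section
/- Fix 1 ≤ d ≤ n and let p be a function from subsets of {1,…,n} to ℝ ∪ {∞} with p(S) = ∞ whenever |S| ≠ d, p not identically ∞, satisfying the valuated matroid exchange axiom: for every (d−1)-subset σ and every (d+1)-subset τ, the minimum of p(σ∪{i}) + p(τ∖{i}) over i ∈ τ (arithmetic in ℝ ∪ {∞}) is attained at least twice. Let L_p be the set of x ∈ (ℝ ∪ {∞})ⁿ, not identically ∞, such that for every (d+1)-subset τ, the minimum of p(τ∖{i}) + x_i over i ∈ τ is attained at least twice. Then x ∈ L_p if and only if there exist coefficients λ_σ ∈ ℝ ∪ {∞}, indexed by the (d−1)-subsets σ of {1,…,n},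 such that x_j = min_σ (λ_σ + p(σ ∪ {j})) for all j ∈ {1,…,n}. (The tropical linear space L_p is the tropical convex hull of the cocircuits p(σ∗) of the valuated matroid p.) -/
/-!
Let `x ∈ L_p` with `x j` finite, and let `B ∋ j` be a basis minimising `p B - ∑_{i ∈ B - j} x i`
(infinite entries of `x` replaced by a large constant). If `x j + p (B - j + k) < x k + p B` for
some `k`, the relation of `L_p` at `τ = B + k` yields `i ≠ j, k` with
`p (B - i + k) + x i < p B + x k`, so `B - i + k` has smaller potential. Hence
`x k + p B ≤ x j + p (B - j + k)` for all `k`: taking `λ_σ` least with `λ_σ + p(σ∗) ≥ x`, the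
cocircuit at `σ = B - j` touches `x` at `j`.

Conversely, if `x j = min_σ (λ_σ + p (σ ∪ j))`, fix `τ` and let `σ₀` realise this minimum at a
minimiser `i₀` of `i ↦ p (τ - i) + x i`. This function lies below `λ_σ₀ + p (σ₀ ∪ i) + p (τ - i)`
and touches it at `i₀`, so it attains its minimum wherever the exchange sum at `(σ₀, τ)` does,
which happens twice.
-/

noncomputable section

/-- The minimum of `f` over the finite set `s` is attained at least twice. -/
def MinAttainedTwice {ι α : Type*} [LinearOrder α] (s : Finset ι) (f : ι → α) : Prop :=
  ∃ i ∈ s, ∃ j ∈ s, i ≠ j ∧ f i = f j ∧ ∀ k ∈ s, f i ≤ f k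

/-- A valuated matroid of rank `d` on `{1,…,n}` with values in `ℝ ∪ {∞}`:
`p` is `∞` away from `d`-sets, not identically `∞`, and satisfies the exchange axiom. -/
def IsValuatedMatroidT (d n : ℕ) (p : Finset (Fin n) → WithTop ℝ) : Prop :=
  (∀ S : Finset (Fin n), S.card ≠ d → p S = ⊤) ∧
  (∃ S : Finset (Fin n), p S ≠ ⊤) ∧
  (∀ σ τ : Finset (Fin n), σ.card = d - 1 → τ.card = d + 1 →
    MinAttainedTwice τ (fun i => p (insert i σ) + p (τ.erase i)))

open Finset LinearOrderedAddCommGroupWithTop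

namespace MinAttainedTwice

variable {ι α : Type*} [LinearOrder α] {s : Finset ι} {f : ι → α}

theorem exists_ne_forall_le (h : MinAttainedTwice s f) (j : ι) :
    ∃ i ∈ s, i ≠ j ∧ ∀ k ∈ s, f i ≤ f k := by
  obtain ⟨i₁, hi₁, i₂, hi₂, hne, heq, hmin⟩ := h
  by_cases h₁ : i₁ = j
  · exact ⟨i₂, hi₂, fun h₂ => hne (h₁.trans h₂.symm), heq ▸ hmin⟩
  · exact ⟨i₁, hi₁, h₁, hmin⟩

theorem exists_ne_lt (h : MinAttainedTwice s f) {j k : ι} (hj : j ∈ s) (hjk : f j < f k) :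
    ∃ i ∈ s, i ≠ j ∧ f i < f k :=
  let ⟨i, hi, hij, hmin⟩ := h.exists_ne_forall_le j
  ⟨i, hi, hij, (hmin j hj).trans_lt hjk⟩

theorem of_le_comp {β : Type*} [LinearOrder β] {g : ι → β} {h : β → α} (hh : Monotone h)
    (hg : MinAttainedTwice s g) {i₀ : ι} (hi₀ : i₀ ∈ s) (hmin : ∀ k ∈ s, f i₀ ≤ f k)
    (hle : ∀ i ∈ s, f i ≤ h (g i)) (heq : f i₀ = h (g i₀)) : MinAttainedTwice s f := by
  obtain ⟨i₁, hi₁, i₂, hi₂, hne, heq₁₂, hgmin⟩ := hg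
  have hattain : ∀ i ∈ s, g i = g i₁ → f i = f i₀ := fun i hi hgi =>
    le_antisymm
      (calc f i ≤ h (g i) := hle i hi
        _ ≤ h (g i₀) := hh (hgi ▸ hgmin i₀ hi₀)
        _ = f i₀ := heq.symm)
      (hmin i hi)
  refine ⟨i₁, hi₁, i₂, hi₂, hne, ?_, fun k hk => ?_⟩
  · rw [hattain i₁ hi₁ rfl, hattain i₂ hi₂ heq₁₂.symm]
  · rw [hattain i₁ hi₁ rfl]
    exact hmin k hk

end MinAttainedTwice

section TropicalResidual

variable {ι α : Type*} [Fintype ι] [LinearOrderedAddCommGroupWithTop α]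

theorem LinearOrderedAddCommGroupWithTop.sub_le_iff_le_add_of_ne_top {a b c : α} (hb : b ≠ ⊤) : a - b ≤ c ↔ a ≤ c + b := by
  rw [← add_le_add_iff_left_of_ne_top hb, sub_eq_add_neg, neg_add_cancel_right_of_ne_top hb]

open Classical in
/-- The least `c` with `x ≤ c + q`; `⊤` when `q = ⊤`, where no least such `c` exists. -/
def tropicalResidual (x q : ι → α) : α :=
  if h : (univ.filter (q · ≠ ⊤)).Nonempty then (univ.filter (q · ≠ ⊤)).sup' h (fun k => x k - q k)
  else ⊤

theorem le_tropicalResidual_add (x q : ι → α) (k : ι) : x k ≤ tropicalResidual x q + q k := by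
  classical
  by_cases hqk : q k = ⊤
  · simp [hqk]
  have hk : k ∈ univ.filter (q · ≠ ⊤) := by simpa using hqk
  rw [tropicalResidual, dif_pos ⟨k, hk⟩, ← sub_le_iff_le_add_of_ne_top hqk]
  exact le_sup' (fun k => x k - q k) hk

theorem tropicalResidual_le {x q : ι → α} {c : α} {j : ι} (hqj : q j ≠ ⊤)
    (hc : ∀ k, x k ≤ c + q k) : tropicalResidual x q ≤ c := by
  classical
  rw [tropicalResidual, dif_pos ⟨j, by simpa using hqj⟩]
  refine sup'_le _ _ fun k hk => ?_
  exact (sub_le_iff_le_add_of_ne_top (by simpa using hk)).2 (hc k)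

theorem tropicalResidual_add_eq {x q : ι → α} {j : ι} (hqj : q j ≠ ⊤)
    (h : ∀ k, x k + q j ≤ x j + q k) : tropicalResidual x q + q j = x j := by
  refine le_antisymm ?_ (le_tropicalResidual_add x q j)
  have hle : tropicalResidual x q ≤ x j - q j := tropicalResidual_le hqj fun k => by
    calc x k = x k + q j + -q j := (add_neg_cancel_right_of_ne_top hqj _).symm
      _ ≤ x j + q k + -q j := add_le_add_left (h k) _
      _ = x j - q j + q k := by rw [sub_eq_add_neg, add_right_comm]
  calc tropicalResidual x q + q j ≤ x j - q j + q j := add_le_add_left hle _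
    _ = x j := by rw [sub_eq_add_neg, neg_add_cancel_right_of_ne_top hqj]

end TropicalResidual

theorem Finset.sum_insert_erase_add {ι M : Type*} [AddCommMonoid M] [DecidableEq ι]
    {s : Finset ι} {i k : ι} (hi : i ∈ s) (hk : k ∉ s) (w : ι → M) :
    ∑ l ∈ insert k (s.erase i), w l + w i = ∑ l ∈ s, w l + w k := by
  rw [sum_insert fun h => hk (mem_of_mem_erase h), add_comm (w k), add_right_comm,
    sum_erase_add _ _ hi]

theorem WithTop.untopD_add_untopD_lt {a b c e : WithTop ℝ} {C : ℝ} (ha : a ≠ ⊤) (hb : b ≠ ⊤)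
    (hc : c ≠ ⊤) (hC : a.untopD 0 + b.untopD 0 - c.untopD 0 ≤ C) (h : a + b < c + e) :
    a.untopD 0 + b.untopD (C + 1) < c.untopD 0 + e.untopD (C + 1) := by
  lift a to ℝ using ha
  lift b to ℝ using hb
  lift c to ℝ using hc
  simp only [untopD_coe] at hC ⊢
  cases e with
  | top => rw [untopD_top]; linarith
  | coe e => rw [untopD_coe]; exact_mod_cast h

section TropicalLinearSpace

variable {d n : ℕ} {p : Finset (Fin n) → WithTop ℝ} {x : Fin n → WithTop ℝ}

def MemTropicalLinearSpace (d : ℕ) (p : Finset (Fin n) → WithTop ℝ) (x : Fin n → WithTop ℝ) :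
    Prop :=
  ∀ τ : Finset (Fin n), τ.card = d + 1 → MinAttainedTwice τ (fun i => p (τ.erase i) + x i)

theorem MemTropicalLinearSpace.exists_basis_mem (hL : MemTropicalLinearSpace d p x)
    (hsupp : ∀ S : Finset (Fin n), S.card ≠ d → p S = ⊤) (hpne : ∃ S, p S ≠ ⊤) {j : Fin n}
    (hxj : x j ≠ ⊤) : ∃ B, j ∈ B ∧ p B ≠ ⊤ := by
  obtain ⟨S, hS⟩ := hpne
  by_cases hjS : j ∈ S
  · exact ⟨S, hjS, hS⟩
  have hτ : (insert j S).card = d + 1 := by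
    rw [card_insert_of_notMem hjS, not_imp_comm.1 (hsupp S) hS]
  obtain ⟨i, hi, hij, hmin⟩ := (hL _ hτ).exists_ne_forall_le j
  have hfi : p ((insert j S).erase i) + x i ≠ ⊤ := by
    refine ne_top_of_le_ne_top ?_ (hmin j (mem_insert_self j S))
    rw [erase_insert hjS]
    exact WithTop.add_ne_top.2 ⟨hS, hxj⟩
  exact ⟨_, mem_erase.2 ⟨hij.symm, mem_insert_self j S⟩, (WithTop.add_ne_top.1 hfi).1⟩

theorem MemTropicalLinearSpace.exists_exchange (hL : MemTropicalLinearSpace d p x)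
    {B : Finset (Fin n)} (hB : B.card = d) {j k : Fin n} (hj : j ∈ B) (hk : k ∉ B)
    (hlt : x j + p (insert k (B.erase j)) < x k + p B) :
    ∃ i ∈ B, i ≠ j ∧ p (insert k (B.erase i)) + x i < p B + x k := by
  have hkj : k ≠ j := fun h => hk (h ▸ hj)
  have hτ : (insert k B).card = d + 1 := by rw [card_insert_of_notMem hk, hB]
  have hfjk : p ((insert k B).erase j) + x j < p ((insert k B).erase k) + x k := by
    rwa [erase_insert_of_ne hkj, erase_insert hk, add_comm, add_comm (p B)]
  obtain ⟨i, hi, hij, hfi⟩ := (hL _ hτ).exists_ne_lt (mem_insert_of_mem hj) hfjk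
  have hik : i ≠ k := fun h => (h ▸ hfi).false
  rw [erase_insert_of_ne hik.symm, erase_insert hk] at hfi
  exact ⟨i, mem_of_mem_insert_of_ne hi hik, hij, hfi⟩

theorem add_le_add_insert_erase_of_mem (hsupp : ∀ S : Finset (Fin n), S.card ≠ d → p S = ⊤)
    {B : Finset (Fin n)} (hB : B.card = d) {j k : Fin n} (hj : j ∈ B) (hk : k ∈ B) :
    x k + p B ≤ x j + p (insert k (B.erase j)) := by
  obtain rfl | hkj := eq_or_ne k j
  · rw [insert_erase hj, add_comm]
  have hcard : (B.erase j).card ≠ d := by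
    rw [card_erase_of_mem hj, ← hB]
    exact Nat.pred_ne_self (card_ne_zero_of_mem hj)
  rw [insert_eq_of_mem (mem_erase.2 ⟨hkj, hk⟩), hsupp _ hcard, add_top]
  exact le_top

theorem MemTropicalLinearSpace.exists_basis_forall_add_le (hL : MemTropicalLinearSpace d p x)
    (hsupp : ∀ S : Finset (Fin n), S.card ≠ d → p S = ⊤) (hpne : ∃ S, p S ≠ ⊤) {j : Fin n}
    (hxj : x j ≠ ⊤) : ∃ B, j ∈ B ∧ p B ≠ ⊤ ∧ ∀ k, x k + p B ≤ x j + p (insert k (B.erase j)) := by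
  classical
  obtain ⟨C, hC⟩ := (Set.finite_range fun t : Finset (Fin n) × Finset (Fin n) × Fin n =>
    (p t.1).untopD 0 + (x t.2.2).untopD 0 - (p t.2.1).untopD 0).bddAbove
  -- an infinite `x k` counts as `C + 1`, more than any exchange of finite values can gain
  let w : Fin n → ℝ := fun i => (x i).untopD (C + 1)
  let Φ : Finset (Fin n) → ℝ := fun B => (p B).untopD 0 - ∑ i ∈ B.erase j, w i
  obtain ⟨B, hB, hBmin⟩ := exists_min_image (univ.filter fun B => j ∈ B ∧ p B ≠ ⊤) Φ
    (by simpa [Finset.Nonempty] using hL.exists_basis_mem hsupp hpne hxj)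
  simp only [mem_filter, mem_univ, true_and, and_imp] at hB hBmin
  obtain ⟨hjB, hpB⟩ := hB
  have hBd : B.card = d := not_imp_comm.1 (hsupp B) hpB
  refine ⟨B, hjB, hpB, fun k => ?_⟩
  by_cases hkB : k ∈ B
  · exact add_le_add_insert_erase_of_mem hsupp hBd hjB hkB
  refine le_of_not_gt fun hlt => ?_
  obtain ⟨i, hiB, hij, hlt'⟩ := hL.exists_exchange hBd hjB hkB hlt
  set B' := insert k (B.erase i)
  obtain ⟨hpB', hxi⟩ := WithTop.add_ne_top.1 (ne_top_of_lt hlt')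
  have hjB' : j ∈ B' := mem_insert_of_mem (mem_erase.2 ⟨hij.symm, hjB⟩)
  have hw : (p B').untopD 0 + w i < (p B).untopD 0 + w k :=
    WithTop.untopD_add_untopD_lt hpB' hxi hpB (hC ⟨(B', B, i), rfl⟩) hlt'
  have hsum : ∑ l ∈ B'.erase j, w l + w i = ∑ l ∈ B.erase j, w l + w k := by
    rw [erase_insert_of_ne fun h : k = j => hkB (h ▸ hjB), erase_right_comm]
    exact sum_insert_erase_add (mem_erase.2 ⟨hij, hiB⟩) (fun h => hkB (mem_of_mem_erase h)) w
  have := hBmin B' hjB' hpB'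
  simp only [Φ] at this
  linarith

theorem MemTropicalLinearSpace.exists_isLeast_cocircuit_combination
    (hL : MemTropicalLinearSpace d p x) (hsupp : ∀ S : Finset (Fin n), S.card ≠ d → p S = ⊤)
    (hpne : ∃ S, p S ≠ ⊤) :
    ∃ lam : Finset (Fin n) → WithTop ℝ, ∀ j : Fin n,
      IsLeast {y | ∃ σ : Finset (Fin n), σ.card = d - 1 ∧ y = lam σ + p (insert j σ)} (x j) := by
  refine ⟨fun σ => tropicalResidual x fun k => p (insert k σ), fun j => ⟨?_, ?_⟩⟩
  · by_cases hxj : x j = ⊤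
    · obtain ⟨S, hS⟩ := hpne
      obtain ⟨σ, -, hσ⟩ := exists_subset_card_eq ((Nat.sub_le d 1).trans
        (not_imp_comm.1 (hsupp S) hS).ge)
      exact ⟨σ, hσ, hxj ▸ (top_le_iff.1 (hxj ▸ le_tropicalResidual_add x _ j)).symm⟩
    obtain ⟨B, hjB, hpB, htight⟩ := hL.exists_basis_forall_add_le hsupp hpne hxj
    refine ⟨B.erase j, by rw [card_erase_of_mem hjB, not_imp_comm.1 (hsupp B) hpB], ?_⟩
    refine (tropicalResidual_add_eq (q := fun k => p (insert k (B.erase j))) ?_ ?_).symm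
    · simpa [insert_erase hjB] using hpB
    · simpa [insert_erase hjB] using htight
  · rintro y ⟨σ, -, rfl⟩
    exact le_tropicalResidual_add x _ j

theorem memTropicalLinearSpace_of_isLeast
    (hexch : ∀ σ τ : Finset (Fin n), σ.card = d - 1 → τ.card = d + 1 →
      MinAttainedTwice τ (fun i => p (insert i σ) + p (τ.erase i)))
    {lam : Finset (Fin n) → WithTop ℝ}
    (hlam : ∀ j : Fin n,
      IsLeast {y | ∃ σ : Finset (Fin n), σ.card = d - 1 ∧ y = lam σ + p (insert j σ)} (x j)) :
    MemTropicalLinearSpace d p x := by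
  intro τ hτ
  obtain ⟨i₀, hi₀, hmin⟩ := exists_min_image τ (fun i => p (τ.erase i) + x i)
    (card_pos.1 (by omega))
  obtain ⟨σ, hσ, hx⟩ := (hlam i₀).1
  refine (hexch σ τ hσ hτ).of_le_comp (h := (lam σ + ·)) (fun _ _ h => add_le_add_right h _)
    hi₀ hmin (fun i _ => ?_) ?_
  · calc p (τ.erase i) + x i ≤ p (τ.erase i) + (lam σ + p (insert i σ)) :=
          add_le_add_right ((hlam i).2 ⟨σ, hσ, rfl⟩) _
      _ = lam σ + (p (insert i σ) + p (τ.erase i)) := by ac_rfl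
  · rw [hx]; ac_rfl

end TropicalLinearSpace

theorem tropical_linear_space_eq_tconv_of_cocircuits_general {d n : ℕ}
    (p : Finset (Fin n) → WithTop ℝ) (hp : IsValuatedMatroidT d n p)
    (x : Fin n → WithTop ℝ) :
    (∀ τ : Finset (Fin n), τ.card = d + 1 →
        MinAttainedTwice τ (fun i => p (τ.erase i) + x i)) ↔
    (∃ lam : Finset (Fin n) → WithTop ℝ, ∀ j : Fin n,
        IsLeast {y : WithTop ℝ | ∃ σ : Finset (Fin n),
          σ.card = d - 1 ∧ y = lam σ + p (insert j σ)} (x j)) :=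
  let ⟨hsupp, hpne, hexch⟩ := hp
  ⟨fun hL => MemTropicalLinearSpace.exists_isLeast_cocircuit_combination hL hsupp hpne,
    fun ⟨_, hlam⟩ => memTropicalLinearSpace_of_isLeast hexch hlam⟩

theorem tropical_linear_space_eq_tconv_of_cocircuits {d n : ℕ} (hd : 1 ≤ d) (hdn : d ≤ n)
    (p : Finset (Fin n) → WithTop ℝ) (hp : IsValuatedMatroidT d n p)
    (x : Fin n → WithTop ℝ) (hx : ¬ ∀ i, x i = ⊤) :
    (∀ τ : Finset (Fin n), τ.card = d + 1 →
        MinAttainedTwice τ (fun i => p (τ.erase i) + x i)) ↔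
    (∃ lam : Finset (Fin n) → WithTop ℝ, ∀ j : Fin n,
        IsLeast {y : WithTop ℝ | ∃ σ : Finset (Fin n),
          σ.card = d - 1 ∧ y = lam σ + p (insert j σ)} (x j)) :=
  tropical_linear_space_eq_tconv_of_cocircuits_general p hp x
end
end

section
/- Let p be a real-valued valuated matroid of rank d on {1,…,n} and let x ∈ ℝⁿ. Define w ∈ ℝⁿ by the Blue Rule: w_i = min over all (d−1)-subsets σ ⊆ {1,…,n} with i ∉ σ of max over all j ∉ σ of (p(σ∪{i}) − p(σ∪{j}) + x_j). Then w ∈ L_p, w ≥ x coordinatewise, and w ≤ w' coordinatewise for every w' ∈ L_p with w' ≥ x; that is, w is the nearest point projection π_{L_p}(x) of x onto the tropical linear space L_p. -/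
/- Blue Rule: for a real-valued valuated matroid p of rank d on {1,…,n} and x ∈ ℝⁿ, the
   point w with w_i = min_{σ : |σ| = d−1, i ∉ σ} max_{j ∉ σ} (p(σ∪{i}) − p(σ∪{j}) + x_j)
   is the nearest point projection of x onto the tropical linear space L_p: w ∈ L_p,
   w ≥ x, and w ≤ w' for every w' ∈ L_p with w' ≥ x. -/

noncomputable section

/-- A real-valued valuated matroid of rank `d` on `{1,…,n}` (only the values on
`d`-element subsets matter): the exchange axiom with minimum over `i ∈ τ ∖ σ`. -/
def IsValuatedMatroidR (d n : ℕ) (p : Finset (Fin n) → ℝ) : Prop :=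
  ∀ σ τ : Finset (Fin n), σ.card = d - 1 → τ.card = d + 1 →
    MinAttainedTwice (τ \ σ) (fun i => p (insert i σ) + p (τ.erase i))

/-- Membership in the tropical linear space `L_p`. -/
def InTropLinSpace (d n : ℕ) (p : Finset (Fin n) → ℝ) (x : Fin n → ℝ) : Prop :=
  ∀ τ : Finset (Fin n), τ.card = d + 1 →
    MinAttainedTwice τ (fun i => p (τ.erase i) + x i)

/-- The Blue Rule:
`w i = min_{σ : |σ| = d−1, i ∉ σ} max_{j ∉ σ} (p(σ∪{i}) − p(σ∪{j}) + x j)`.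
(The inner maximum is taken over `insert i σᶜ`, which equals `σᶜ` for the
relevant sets `σ` with `i ∉ σ`.) -/
def blueRule {n : ℕ} (d : ℕ) (hd : 1 ≤ d) (hdn : d ≤ n)
    (p : Finset (Fin n) → ℝ) (x : Fin n → ℝ) : Fin n → ℝ :=
  fun i =>
    (((Finset.univ : Finset (Fin n)).powersetCard (d - 1)).filter (fun σ => i ∉ σ)).inf'
      (by
        obtain ⟨t, hts, htc⟩ := Finset.exists_subset_card_eq (s := Finset.univ.erase i) (n := d - 1)
          (by
            have hc : (Finset.univ.erase i).card = n - 1 := by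
              rw [Finset.card_erase_of_mem (Finset.mem_univ i)]
              simp
            omega)
        refine ⟨t, Finset.mem_filter.mpr ⟨Finset.mem_powersetCard.mpr
          ⟨Finset.subset_univ t, htc⟩, fun hit => ?_⟩⟩
        exact (Finset.notMem_erase i Finset.univ) (hts hit))
      (fun σ => (insert i σᶜ).sup' (Finset.insert_nonempty _ _)
        (fun j => p (insert i σ) - p (insert j σ) + x j))

/-!
Along `σ` the Blue Rule bound is `p(σ ∪ i) + μ_σ` with `μ_σ = max_{j ∉ σ} (x_j − p(σ ∪ j))`, so
comparing two coordinates against the same `σ` turns the tropical Plücker relation for `(σ, τ)`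
into the tropical linear relation for `τ`: this gives `w ∈ L_p`. For minimality, fix `i` and a
`d`-set `B ∋ i` minimising `p(B) − Σ_{k ∈ B} w'_k`; for `j ∉ B` the tropical linear relation
of `w'` on `B ∪ j` forces `p(B) + w'_j ≤ p(B − i + j) + w'_i`, which bounds the Blue Rule term
for `σ = B − i` by `w'_i`.
-/

namespace MinAttainedTwice

variable {ι α : Type*}

theorem le_of_forall_ne [LinearOrder α] {s : Finset ι} {f : ι → α} (h : MinAttainedTwice s f)
    {i j : ι} (hi : i ∈ s) (hjf : ∀ k ∈ s, k ≠ i → f j ≤ f k) : f j ≤ f i := by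
  obtain ⟨a, ha, b, hb, hab, hfab, hmin⟩ := h
  by_cases hai : a = i
  · have hbi : b ≠ i := fun hbi => hab (hai.trans hbi.symm)
    calc f j ≤ f b := hjf b hb hbi
      _ = f i := by rw [← hfab, hai]
  · exact (hjf a ha hai).trans (hmin i hi)

theorem of_sub_le [AddCommGroup α] [LinearOrder α] [IsOrderedAddMonoid α] {s t : Finset ι}
    {f g : ι → α} (hts : t ⊆ s) (hg : MinAttainedTwice t g) {i₀ : ι} (hi₀ : i₀ ∈ t)
    (hmin : ∀ k ∈ s, f i₀ ≤ f k) (hsub : ∀ c ∈ t, f c - f i₀ ≤ g c - g i₀) :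
    MinAttainedTwice s f := by
  obtain ⟨a, ha, b, hb, hab, hgab, hgmin⟩ := hg
  have hfa : f a = f i₀ := le_antisymm
    (sub_nonpos.1 ((hsub a ha).trans (sub_nonpos.2 (hgmin i₀ hi₀)))) (hmin a (hts ha))
  have hfb : f b = f i₀ := le_antisymm
    (sub_nonpos.1 ((hsub b hb).trans (sub_nonpos.2 (hgab ▸ hgmin i₀ hi₀)))) (hmin b (hts hb))
  exact ⟨a, hts ha, b, hts hb, hab, hfa.trans hfb.symm, fun k hk => hfa ▸ hmin k hk⟩

end MinAttainedTwice

section BlueRule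

variable {n d : ℕ} (p : Finset (Fin n) → ℝ) (x : Fin n → ℝ)

def blueBound (σ : Finset (Fin n)) (i : Fin n) : ℝ :=
  (insert i σᶜ).sup' (Finset.insert_nonempty _ _) fun j => p (insert i σ) - p (insert j σ) + x j

theorem blueBound_eq {σ : Finset (Fin n)} {i : Fin n} (hi : i ∉ σ) :
    blueBound p x σ i =
      p (insert i σ) + σᶜ.sup' (Finset.nonempty_def.2 ⟨i, Finset.mem_compl.2 hi⟩)
        fun j => x j - p (insert j σ) := by
  rw [Finset.add_sup', blueBound]
  exact Finset.sup'_congr _ (Finset.insert_eq_of_mem (Finset.mem_compl.2 hi)) fun j _ => by ring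

theorem blueBound_sub_eq {σ : Finset (Fin n)} {i c : Fin n} (hi : i ∉ σ) (hc : c ∉ σ) :
    blueBound p x σ c - p (insert c σ) = blueBound p x σ i - p (insert i σ) := by
  rw [blueBound_eq p x hi, blueBound_eq p x hc]
  ring

theorem le_blueBound (σ : Finset (Fin n)) (i : Fin n) : x i ≤ blueBound p x σ i :=
  Finset.le_sup'_of_le _ (Finset.mem_insert_self i σᶜ) (by simp)

theorem nonempty_powersetCard_filter_notMem (hdn : d ≤ n) (i : Fin n) :
    ((Finset.univ.powersetCard (d - 1)).filter fun σ => i ∉ σ).Nonempty := by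
  obtain ⟨σ, hσi, hσ⟩ := Finset.exists_subset_card_eq (s := Finset.univ.erase i) (n := d - 1)
    (by rw [Finset.card_erase_of_mem (Finset.mem_univ i), Finset.card_univ, Fintype.card_fin]
        omega)
  exact ⟨σ, Finset.mem_filter.2 ⟨Finset.mem_powersetCard.2 ⟨Finset.subset_univ σ, hσ⟩,
    fun h => Finset.notMem_erase i _ (hσi h)⟩⟩

theorem exists_card_eq_mem_forall_le (hd : 1 ≤ d) (hdn : d ≤ n) (f : Finset (Fin n) → ℝ)
    (i : Fin n) : ∃ B : Finset (Fin n), B.card = d ∧ i ∈ B ∧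
      ∀ B' : Finset (Fin n), B'.card = d → i ∈ B' → f B ≤ f B' := by
  obtain ⟨B₀, hiB₀, -, hB₀⟩ := Finset.exists_subsuperset_card_eq (Finset.subset_univ {i})
    (by simpa using hd) (by simpa using hdn)
  obtain ⟨B, hB, hmin⟩ := Finset.exists_min_image
    ((Finset.univ.powersetCard d).filter fun B => i ∈ B) f
    ⟨B₀, Finset.mem_filter.2 ⟨Finset.mem_powersetCard.2 ⟨Finset.subset_univ _, hB₀⟩,
      hiB₀ (Finset.mem_singleton_self i)⟩⟩
  obtain ⟨hB, hi⟩ := Finset.mem_filter.1 hB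
  exact ⟨B, (Finset.mem_powersetCard.1 hB).2, hi, fun B' hB' hi' =>
    hmin B' (Finset.mem_filter.2 ⟨Finset.mem_powersetCard.2 ⟨Finset.subset_univ _, hB'⟩, hi'⟩)⟩

theorem add_le_add_of_forall_le {w' : Fin n → ℝ} (hw' : InTropLinSpace d n p w')
    {B : Finset (Fin n)} (hB : B.card = d) {i j : Fin n} (hi : i ∈ B) (hj : j ∉ B)
    (hmin : ∀ B' : Finset (Fin n), B'.card = d → i ∈ B' →
      p B - ∑ k ∈ B, w' k ≤ p B' - ∑ k ∈ B', w' k) :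
    p B + w' j ≤ p (insert j (B.erase i)) + w' i := by
  have hji : j ≠ i := fun h => hj (h ▸ hi)
  have hτ : (insert j B).card = d + 1 := by rw [Finset.card_insert_of_notMem hj, hB]
  have hle := (hw' _ hτ).le_of_forall_ne (j := j) (Finset.mem_insert_of_mem hi)
    fun k hk hki => by
      -- `(insert j B).erase k` is a `d`-set containing `i`, a competitor of `B`
      have hsum := Finset.sum_erase_add _ w' hk
      rw [Finset.sum_insert hj] at hsum
      have := hmin _ (by rw [Finset.card_erase_of_mem hk, hτ]; rfl)
        (Finset.mem_erase.2 ⟨Ne.symm hki, Finset.mem_insert_of_mem hi⟩)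
      simp only [Finset.erase_insert hj]
      linarith
  simpa only [Finset.erase_insert hj, Finset.erase_insert_of_ne hji] using hle

theorem blueBound_erase_le {w' : Fin n → ℝ} (hw' : InTropLinSpace d n p w') (hxw' : x ≤ w')
    {B : Finset (Fin n)} (hB : B.card = d) {i : Fin n} (hi : i ∈ B)
    (hmin : ∀ B' : Finset (Fin n), B'.card = d → i ∈ B' →
      p B - ∑ k ∈ B, w' k ≤ p B' - ∑ k ∈ B', w' k) :
    blueBound p x (B.erase i) i ≤ w' i := by
  refine Finset.sup'_le _ _ fun j hj => ?_
  by_cases hji : j = i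
  · subst hji
    simpa [Finset.insert_erase hi] using hxw' j
  · rw [Finset.insert_erase hi]
    have hjB : j ∉ B := fun hjB => Finset.mem_compl.1
      ((Finset.mem_insert.1 hj).resolve_left hji) (Finset.mem_erase.2 ⟨hji, hjB⟩)
    linarith [add_le_add_of_forall_le p hw' hB hi hjB hmin, hxw' j]

variable (hd : 1 ≤ d) (hdn : d ≤ n)

theorem blueRule_le_blueBound {σ : Finset (Fin n)} {i : Fin n} (hσ : σ.card = d - 1)
    (hi : i ∉ σ) : blueRule d hd hdn p x i ≤ blueBound p x σ i :=
  Finset.inf'_le _ (Finset.mem_filter.2 ⟨Finset.mem_powersetCard.2 ⟨Finset.subset_univ σ, hσ⟩, hi⟩)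

theorem exists_blueRule_eq_blueBound (i : Fin n) :
    ∃ σ : Finset (Fin n), σ.card = d - 1 ∧ i ∉ σ ∧ blueRule d hd hdn p x i = blueBound p x σ i := by
  obtain ⟨σ, hσ, h⟩ := Finset.exists_mem_eq_inf'
    (nonempty_powersetCard_filter_notMem hdn i) fun σ => blueBound p x σ i
  obtain ⟨hσ, hi⟩ := Finset.mem_filter.1 hσ
  exact ⟨σ, (Finset.mem_powersetCard.1 hσ).2, hi, h⟩

theorem le_blueRule : x ≤ blueRule d hd hdn p x := fun i =>
  Finset.le_inf' _ _ fun σ _ => le_blueBound p x σ i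

theorem blueRule_mem_inTropLinSpace (hp : IsValuatedMatroidR d n p) :
    InTropLinSpace d n p (blueRule d hd hdn p x) := by
  intro τ hτ
  obtain ⟨i₀, hi₀, hmin⟩ := τ.exists_min_image (fun i => p (τ.erase i) + blueRule d hd hdn p x i)
    (Finset.card_pos.1 (by omega))
  obtain ⟨σ, hσ, hi₀σ, hwi₀⟩ := exists_blueRule_eq_blueBound p x hd hdn i₀
  refine (hp σ τ hσ hτ).of_sub_le Finset.sdiff_subset (Finset.mem_sdiff.2 ⟨hi₀, hi₀σ⟩) hmin
    fun c hc => ?_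
  have hcσ := (Finset.mem_sdiff.1 hc).2
  linarith [blueRule_le_blueBound p x hd hdn hσ hcσ, blueBound_sub_eq p x hi₀σ hcσ]

theorem blueRule_le_of_inTropLinSpace {w' : Fin n → ℝ} (hw' : InTropLinSpace d n p w')
    (hxw' : x ≤ w') : blueRule d hd hdn p x ≤ w' := fun i => by
  obtain ⟨B, hB, hi, hmin⟩ :=
    exists_card_eq_mem_forall_le hd hdn (fun B => p B - ∑ k ∈ B, w' k) i
  have hσ : (B.erase i).card = d - 1 := by rw [Finset.card_erase_of_mem hi, hB]
  exact (blueRule_le_blueBound p x hd hdn hσ (Finset.notMem_erase i B)).trans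
    (blueBound_erase_le p x hw' hxw' hB hi hmin)

end BlueRule

theorem blue_rule_is_projection {d n : ℕ} (hd : 1 ≤ d) (hdn : d ≤ n)
    (p : Finset (Fin n) → ℝ) (hp : IsValuatedMatroidR d n p) (x : Fin n → ℝ) :
    InTropLinSpace d n p (blueRule d hd hdn p x) ∧
    x ≤ blueRule d hd hdn p x ∧
    ∀ w' : Fin n → ℝ, InTropLinSpace d n p w' → x ≤ w' →
      blueRule d hd hdn p x ≤ w' :=
  ⟨blueRule_mem_inTropLinSpace p x hd hdn hp, le_blueRule p x hd hdn,
    fun _ hw' hxw' => blueRule_le_of_inTropLinSpace p x hd hdn hw' hxw'⟩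
end
end

section
/- Let p be a real-valued valuated matroid of rank d on {1,…,n} and let x ∈ ℝⁿ. Define v ∈ ℝⁿ by the Red Rule: for each i, v_i is the maximum of 0 together with the quantities γ_{τ,i} = (min_{k ∈ τ, k ≠ i} (p(τ∖{k}) + x_k)) − (p(τ∖{i}) + x_i), taken over all (d+1)-subsets τ containing i for which p(τ∖{k}) + x_k > p(τ∖{i}) + x_i for all k ∈ τ∖{i}. Then x + v ∈ L_p, x + v ≥ x coordinatewise, and x + v ≤ w' coordinatewise for every w' ∈ L_p with w' ≥ x; that is, x + v is the nearest point projection π_{L_p}(x) of x onto the tropical linear space L_p. -/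
/- Red Rule: for a real-valued valuated matroid p of rank d on {1,…,n} and x ∈ ℝⁿ, let
   v_i be the maximum of 0 together with the quantities
   γ_{τ,i} = (min_{k ∈ τ, k ≠ i} (p(τ∖{k}) + x_k)) − (p(τ∖{i}) + x_i) over all
   (d+1)-subsets τ ∋ i on which the minimum of p(τ∖{k}) + x_k is strictly attained at i.
   Then x + v is the nearest point projection of x onto the tropical linear space L_p. -/

noncomputable section

/-- The Red Rule vector `v`: `v i` is the maximum (supremum) of `0` together with the
gaps `γ_{τ,i}` over all `(d+1)`-subsets `τ` containing `i` at which the minimum of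
`p(τ∖{k}) + x k` is attained only at `i`. -/
def redRule (d : ℕ) {n : ℕ} (p : Finset (Fin n) → ℝ) (x : Fin n → ℝ) : Fin n → ℝ :=
  fun i => sSup {t : ℝ | t = 0 ∨ ∃ τ : Finset (Fin n), τ.card = d + 1 ∧ i ∈ τ ∧
    (∀ k ∈ τ, k ≠ i → p (τ.erase i) + x i < p (τ.erase k) + x k) ∧
    ∃ m : ℝ, IsLeast {y : ℝ | ∃ k ∈ τ.erase i, y = p (τ.erase k) + x k} m ∧
      t = m - (p (τ.erase i) + x i)}

namespace RedRuleAux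

open Finset

variable {d n : ℕ} (p : Finset (Fin n) → ℝ) (x : Fin n → ℝ)

/-- The set whose supremum defines `redRule d p x i`. -/
def vSet (d : ℕ) {n : ℕ} (p : Finset (Fin n) → ℝ) (x : Fin n → ℝ) (i : Fin n) : Set ℝ :=
  {t : ℝ | t = 0 ∨ ∃ τ : Finset (Fin n), τ.card = d + 1 ∧ i ∈ τ ∧
    (∀ k ∈ τ, k ≠ i → p (τ.erase i) + x i < p (τ.erase k) + x k) ∧
    ∃ m : ℝ, IsLeast {y : ℝ | ∃ k ∈ τ.erase i, y = p (τ.erase k) + x k} m ∧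
      t = m - (p (τ.erase i) + x i)}

lemma redRule_eq (i : Fin n) : redRule d p x i = sSup (vSet d p x i) := rfl

lemma zero_mem_vSet (i : Fin n) : (0 : ℝ) ∈ vSet d p x i := Or.inl rfl

lemma bddAbove_vSet (i : Fin n) : BddAbove (vSet d p x i) := by
  have hsub : vSet d p x i ⊆ insert (0 : ℝ)
      (Set.range fun q : Finset (Fin n) × Fin n =>
        p (q.1.erase q.2) + x q.2 - (p (q.1.erase i) + x i)) := by
    rintro t (rfl | ⟨τ, _, _, _, m, hm, rfl⟩)
    · exact Set.mem_insert _ _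
    · obtain ⟨k, hk, hmk⟩ := hm.1
      exact Set.mem_insert_of_mem _ ⟨(τ, k), by simp [← hmk]⟩
  exact (((Set.finite_range _).insert 0).subset hsub).bddAbove

lemma v_nonneg (i : Fin n) : 0 ≤ redRule d p x i :=
  le_csSup (bddAbove_vSet p x i) (zero_mem_vSet p x i)

lemma le_v {i : Fin n} {t : ℝ} (ht : t ∈ vSet d p x i) : t ≤ redRule d p x i :=
  le_csSup (bddAbove_vSet p x i) ht

/-- Part (c): anything in `L_p` above `x` is above `x + v`, coordinatewise. -/
lemma proj_min {w : Fin n → ℝ} (hw : InTropLinSpace d n p w) (hxw : x ≤ w) (i : Fin n) :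
    x i + redRule d p x i ≤ w i := by
  have hb : redRule d p x i ≤ w i - x i := by
    rw [redRule_eq]
    refine csSup_le ⟨0, zero_mem_vSet p x i⟩ ?_
    rintro t (rfl | ⟨τ, hτc, hiτ, hred, m, hm, rfl⟩)
    · have := hxw i; linarith
    · obtain ⟨a, ha, b, hb', hab, heq, hminf⟩ := hw τ hτc
      obtain ⟨k, hkτ, hki, hkle⟩ :
          ∃ k, k ∈ τ ∧ k ≠ i ∧ p (τ.erase k) + w k ≤ p (τ.erase i) + w i := by
        rcases eq_or_ne a i with rfl | hai
        · exact ⟨b, hb', Ne.symm hab, le_of_eq heq.symm⟩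
        · exact ⟨a, ha, hai, hminf i hiτ⟩
      have hm2 : m ≤ p (τ.erase k) + x k :=
        hm.2 ⟨k, Finset.mem_erase.2 ⟨hki, hkτ⟩, rfl⟩
      have := hxw k
      linarith
  linarith

/-- Key lemma: existence of a good `(d-1)`-set `σ` for the cocircuit through
coordinate `i` at level `x i + v i`.  Found by minimizing
`ν(σ) = p(σ ∪ i) - ∑_{m ∈ σ} x m`. -/
lemma exists_sigma (hd : 1 ≤ d) (hdn : d ≤ n) (i : Fin n) :
    ∃ σ : Finset (Fin n), σ.card = d - 1 ∧ i ∉ σ ∧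
      ∀ k, k ∉ σ → k ≠ i →
        p (insert i σ) + x k ≤ p (insert k σ) + (x i + redRule d p x i) := by
  classical
  set T : Finset (Finset (Fin n)) :=
    (Finset.univ.powersetCard (d - 1)).filter (fun σ => i ∉ σ) with hT
  have hTmem : ∀ σ : Finset (Fin n), σ ∈ T ↔ σ.card = d - 1 ∧ i ∉ σ := by
    intro σ
    simp [hT, Finset.mem_powersetCard_univ]
  have hTne : T.Nonempty := by
    obtain ⟨σ₀, hsub, hcard⟩ := Finset.exists_subset_card_eq
      (s := Finset.univ.erase i) (n := d - 1)
      (by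
        rw [Finset.card_erase_of_mem (Finset.mem_univ i), Finset.card_univ, Fintype.card_fin]
        omega)
    exact ⟨σ₀, (hTmem σ₀).2 ⟨hcard, fun h => (Finset.mem_erase.1 (hsub h)).1 rfl⟩⟩
  obtain ⟨σ, hσT, hmin⟩ :=
    T.exists_min_image (fun σ => p (insert i σ) - ∑ m ∈ σ, x m) hTne
  obtain ⟨hσcard, hiσ⟩ := (hTmem σ).1 hσT
  refine ⟨σ, hσcard, hiσ, ?_⟩
  by_contra hcon
  push_neg at hcon
  obtain ⟨k, hkσ, hki, hbad⟩ := hcon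
  -- hbad : p (insert k σ) + (x i + redRule d p x i) < p (insert i σ) + x k
  set τ : Finset (Fin n) := insert i (insert k σ) with hτ
  have hiks : i ∉ insert k σ := by
    simp only [Finset.mem_insert]
    push_neg
    exact ⟨fun h => hki h.symm, hiσ⟩
  have hkis : k ∉ insert i σ := by
    simp only [Finset.mem_insert]
    push_neg
    exact ⟨hki, hkσ⟩
  have hτcard : τ.card = d + 1 := by
    rw [hτ, Finset.card_insert_of_notMem hiks, Finset.card_insert_of_notMem hkσ, hσcard]
    omega
  have hτei : τ.erase i = insert k σ := by
    rw [hτ, Finset.erase_insert hiks]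
  have hτek : τ.erase k = insert i σ := by
    rw [hτ, Finset.insert_comm, Finset.erase_insert hkis]
  have hiτ : i ∈ τ := Finset.mem_insert_self _ _
  have hkτ : k ∈ τ := Finset.mem_insert_of_mem (Finset.mem_insert_self _ _)
  have hv0 : 0 ≤ redRule d p x i := v_nonneg p x i
  -- find l ∈ σ with a small value
  obtain ⟨l, hlσ, hlle⟩ :
      ∃ l ∈ σ, p (τ.erase l) + x l ≤ p (insert k σ) + (x i + redRule d p x i) := by
    by_cases hred : ∀ k' ∈ τ, k' ≠ i → p (τ.erase i) + x i < p (τ.erase k') + x k'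
    · -- τ is red at i; the gap is bounded by v i
      obtain ⟨l, hl1, hl2⟩ := (τ.erase i).exists_min_image
        (fun k' => p (τ.erase k') + x k') ⟨k, Finset.mem_erase.2 ⟨hki, hkτ⟩⟩
      have hmem : (p (τ.erase l) + x l - (p (τ.erase i) + x i)) ∈ vSet d p x i := by
        refine Or.inr ⟨τ, hτcard, hiτ, hred, p (τ.erase l) + x l,
          ⟨⟨l, hl1, rfl⟩, ?_⟩, rfl⟩
        rintro y ⟨k', hk', rfl⟩
        exact hl2 k' hk'
      have hle := le_v p x hmem
      rw [hτei] at hle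
      have hlk : l ≠ k := by
        intro h
        rw [h, hτek] at hle
        linarith
      have hlτ : l ∈ τ.erase i := hl1
      rw [Finset.mem_erase, hτ] at hlτ
      obtain ⟨hlne, hlmem⟩ := hlτ
      rw [Finset.mem_insert, Finset.mem_insert] at hlmem
      rcases hlmem with h | h | h
      · exact absurd h hlne
      · exact absurd h hlk
      · exact ⟨l, h, by rw [hτei] at *; linarith⟩
    · push_neg at hred
      obtain ⟨l, hlτ, hli, hle⟩ := hred
      rw [hτei] at hle
      have hlk : l ≠ k := by
        intro h
        rw [h, hτek] at hle
        linarith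
      rw [hτ, Finset.mem_insert, Finset.mem_insert] at hlτ
      rcases hlτ with h | h | h
      · exact absurd h hli
      · exact absurd h hlk
      · exact ⟨l, h, by linarith⟩
  -- the exchanged set σ' = (σ \ {l}) ∪ {k} has strictly smaller ν, contradiction
  have hli : l ≠ i := fun h => hiσ (h ▸ hlσ)
  have hlk : l ≠ k := fun h => hkσ (h ▸ hlσ)
  set σ' : Finset (Fin n) := insert k (σ.erase l) with hσ'
  have hkel : k ∉ σ.erase l := fun h => hkσ (Finset.mem_of_mem_erase h)
  have hσ'T : σ' ∈ T := by
    refine (hTmem σ').2 ⟨?_, ?_⟩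
    · rw [hσ', Finset.card_insert_of_notMem hkel, Finset.card_erase_of_mem hlσ, hσcard]
      have : 1 ≤ σ.card := Finset.card_pos.2 ⟨l, hlσ⟩
      omega
    · rw [hσ']
      simp only [Finset.mem_insert]
      push_neg
      exact ⟨fun h => hki h.symm, fun h => hiσ (Finset.mem_of_mem_erase h)⟩
  have hins : insert i σ' = τ.erase l := by
    rw [hτ, Finset.erase_insert_of_ne hli.symm, Finset.erase_insert_of_ne hlk.symm, hσ']
  have hsum' : ∑ m ∈ σ', x m = x k + ∑ m ∈ σ.erase l, x m := Finset.sum_insert hkel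
  have hsumσ : ∑ m ∈ σ, x m = x l + ∑ m ∈ σ.erase l, x m := by
    rw [add_comm, Finset.sum_erase_add σ x hlσ]
  have hmin' := hmin σ' hσ'T
  rw [hins, hsum', hsumσ] at hmin'
  -- hmin' : p (insert i σ) - (x l + ∑ ...) ≤ p (τ.erase l) - (x k + ∑ ...)
  linarith

/-- Cocircuit-type vectors (with huge values on `σ`) lie in `L_p`. -/
lemma cocircuit_mem (hp : IsValuatedMatroidR d n p) {σ : Finset (Fin n)}
    (hσ : σ.card = d - 1) (lam N : ℝ)
    (hN : ∀ (τ : Finset (Fin n)) (a b : Fin n), τ.card = d + 1 → a ∈ τ → a ∉ σ → b ∈ σ →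
      lam + (p (insert a σ) + p (τ.erase a)) ≤ p (τ.erase b) + N) :
    InTropLinSpace d n p fun k => if k ∈ σ then N else lam + p (insert k σ) := by
  intro τ hτ
  obtain ⟨a, ha, b, hb, hab, heq, hmin⟩ := hp σ τ hσ hτ
  have haτ := (Finset.mem_sdiff.1 ha).1
  have haσ := (Finset.mem_sdiff.1 ha).2
  have hbτ := (Finset.mem_sdiff.1 hb).1
  have hbσ := (Finset.mem_sdiff.1 hb).2
  refine ⟨a, haτ, b, hbτ, hab, ?_, ?_⟩
  · simp only [if_neg haσ, if_neg hbσ]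
    simp only at heq
    linarith
  · intro k hk
    by_cases hkσ : k ∈ σ
    · simp only [if_neg haσ, if_pos hkσ]
      have := hN τ a k hτ haτ haσ hkσ
      linarith
    · simp only [if_neg haσ, if_neg hkσ]
      have := hmin k (Finset.mem_sdiff.2 ⟨hk, hkσ⟩)
      simp only at this
      linarith

lemma mat_min_aux {τ : Finset (Fin n)} {f1 f2 : Fin n → ℝ}
    (a1 b1 : Fin n) (ha1 : a1 ∈ τ) (hb1 : b1 ∈ τ) (hab1 : a1 ≠ b1)
    (he1 : f1 a1 = f1 b1) (hm1 : ∀ k ∈ τ, f1 a1 ≤ f1 k)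
    (hle : ∀ k ∈ τ, f1 a1 ≤ f2 k) :
    MinAttainedTwice τ fun k => min (f1 k) (f2 k) := by
  refine ⟨a1, ha1, b1, hb1, hab1, ?_, ?_⟩
  · have e1 : min (f1 a1) (f2 a1) = f1 a1 := min_eq_left (hle a1 ha1)
    have e2 : min (f1 b1) (f2 b1) = f1 b1 := min_eq_left (he1 ▸ hle b1 hb1)
    simp only [e1, e2]
    exact he1
  · intro k hk
    have h := le_min (hm1 k hk) (hle k hk)
    have e1 : min (f1 a1) (f2 a1) = f1 a1 := min_eq_left (hle a1 ha1)
    simp only [e1]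
    exact h

lemma mat_min {τ : Finset (Fin n)} {f1 f2 : Fin n → ℝ}
    (h1 : MinAttainedTwice τ f1) (h2 : MinAttainedTwice τ f2) :
    MinAttainedTwice τ fun k => min (f1 k) (f2 k) := by
  obtain ⟨a1, ha1, b1, hb1, hab1, he1, hm1⟩ := h1
  obtain ⟨a2, ha2, b2, hb2, hab2, he2, hm2⟩ := h2
  rcases le_total (f1 a1) (f2 a2) with h | h
  · exact mat_min_aux a1 b1 ha1 hb1 hab1 he1 hm1 (fun k hk => h.trans (hm2 k hk))
  · have := mat_min_aux (f1 := f2) (f2 := f1) a2 b2 ha2 hb2 hab2 he2 hm2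
      (fun k hk => h.trans (hm1 k hk))
    have heq : (fun k => min (f2 k) (f1 k)) = fun k => min (f1 k) (f2 k) := by
      funext k; exact min_comm _ _
    rwa [heq] at this

lemma pair_min_mem {w1 w2 : Fin n → ℝ}
    (h1 : InTropLinSpace d n p w1) (h2 : InTropLinSpace d n p w2) :
    InTropLinSpace d n p fun k => min (w1 k) (w2 k) := by
  intro τ hτ
  have hm := mat_min (h1 τ hτ) (h2 τ hτ)
  have heq : (fun k => min (p (τ.erase k) + w1 k) (p (τ.erase k) + w2 k))
      = fun k => p (τ.erase k) + min (w1 k) (w2 k) := by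
    funext k
    exact min_add_add_left _ _ _
  rwa [heq] at hm

lemma inf'_mem (W : Fin n → Fin n → ℝ) :
    ∀ (s : Finset (Fin n)) (hs : s.Nonempty),
      (∀ j ∈ s, InTropLinSpace d n p (W j)) →
      InTropLinSpace d n p fun k => s.inf' hs fun j => W j k := by
  intro s
  induction s using Finset.cons_induction with
  | empty =>
      intro hs
      exact absurd hs Finset.not_nonempty_empty
  | cons a s ha ih =>
      intro hs h
      rcases s.eq_empty_or_nonempty with rfl | hsne
      · have heq : (fun k => (Finset.cons a ∅ ha).inf' hs fun j => W j k) = W a := by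
          funext k
          simp
        rw [heq]
        exact h a (Finset.mem_cons_self a ∅)
      · have h1 := h a (Finset.mem_cons_self a s)
        have h2 := ih hsne (fun j hj => h j (Finset.mem_cons_of_mem hj))
        have heq : (fun k => (Finset.cons a s ha).inf' hs fun j => W j k)
            = fun k => min (W a k) (s.inf' hsne fun j => W j k) := by
          funext k
          rw [Finset.inf'_cons]
        rw [heq]
        exact pair_min_mem p h1 h2

/-- For each coordinate `j`, there is a point of `L_p` above `x` whose `j`-th
coordinate is exactly `x j + v j`. -/
lemma exists_w (hp : IsValuatedMatroidR d n p) (hd : 1 ≤ d) (hdn : d ≤ n) (j : Fin n) :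
    ∃ w : Fin n → ℝ, InTropLinSpace d n p w ∧ x ≤ w ∧ w j = x j + redRule d p x j := by
  classical
  obtain ⟨σ, hσc, hjσ, hKL⟩ := exists_sigma p x hd hdn j
  have hn : 0 < n := hd.trans hdn
  haveI : Nonempty (Fin n) := ⟨⟨0, hn⟩⟩
  set lam : ℝ := x j + redRule d p x j - p (insert j σ) with hlam
  set g : Finset (Fin n) × Fin n × Fin n → ℝ :=
    fun q => lam + (p (insert q.2.1 σ) + p (q.1.erase q.2.1)) - p (q.1.erase q.2.2) with hg
  set N : ℝ := max (Finset.univ.sup' Finset.univ_nonempty x)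
    (Finset.univ.sup' Finset.univ_nonempty g) with hNdef
  refine ⟨fun k => if k ∈ σ then N else lam + p (insert k σ),
    cocircuit_mem p hp hσc lam N ?_, ?_, ?_⟩
  · intro τ a b hτ haτ haσ hbσ
    have hgN : g (τ, a, b) ≤ N :=
      le_trans (Finset.le_sup' g (Finset.mem_univ _)) (le_max_right _ _)
    simp only [hg] at hgN
    linarith
  · intro k
    by_cases hkσ : k ∈ σ
    · simp only [if_pos hkσ]
      exact le_trans (Finset.le_sup' x (Finset.mem_univ k)) (le_max_left _ _)
    · simp only [if_neg hkσ]
      rcases eq_or_ne k j with rfl | hkj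
      · have := v_nonneg (d := d) p x k
        rw [hlam]
        linarith
      · have := hKL k hkσ hkj
        rw [hlam]
        linarith
  · simp only [if_neg hjσ]
    rw [hlam]
    ring

end RedRuleAux

theorem red_rule_is_projection {d n : ℕ} (hd : 1 ≤ d) (hdn : d ≤ n)
    (p : Finset (Fin n) → ℝ) (hp : IsValuatedMatroidR d n p) (x : Fin n → ℝ) :
    InTropLinSpace d n p (x + redRule d p x) ∧
    x ≤ x + redRule d p x ∧
    ∀ w' : Fin n → ℝ, InTropLinSpace d n p w' → x ≤ w' →
      x + redRule d p x ≤ w' := by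
  classical
  have hn : 0 < n := hd.trans hdn
  haveI : Nonempty (Fin n) := ⟨⟨0, hn⟩⟩
  obtain ⟨W, hW1, hW2, hW3⟩ :
      ∃ W : Fin n → Fin n → ℝ, (∀ j, InTropLinSpace d n p (W j)) ∧
        (∀ j, x ≤ W j) ∧ (∀ j, W j j = x j + redRule d p x j) := by
    have h := fun j => RedRuleAux.exists_w p x hp hd hdn j
    choose W h1 h2 h3 using h
    exact ⟨W, h1, h2, h3⟩
  have hne : (Finset.univ : Finset (Fin n)).Nonempty := Finset.univ_nonempty
  set z : Fin n → ℝ := fun k => Finset.univ.inf' hne fun j => W j k with hz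
  have hzL : InTropLinSpace d n p z :=
    RedRuleAux.inf'_mem p W Finset.univ hne (fun j _ => hW1 j)
  have hxz : x ≤ z := fun k => Finset.le_inf' hne _ (fun j _ => hW2 j k)
  have hzxv : ∀ k, z k ≤ x k + redRule d p x k := fun k =>
    le_of_le_of_eq (Finset.inf'_le _ (Finset.mem_univ k)) (hW3 k)
  have hxvz : ∀ k, x k + redRule d p x k ≤ z k := fun k => RedRuleAux.proj_min p x hzL hxz k
  have hzeq : x + redRule d p x = z := by
    funext k
    exact le_antisymm (hxvz k) (hzxv k)
  refine ⟨hzeq ▸ hzL, ?_, ?_⟩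
  · intro i
    have := RedRuleAux.v_nonneg (d := d) p x i
    simp only [Pi.add_apply]
    linarith
  · intro w' h1 h2 i
    exact RedRuleAux.proj_min p x h1 h2 i
end
end

section
/- Let M = (f₁, …, fₙ) be a d×n matrix over K of rank d, let u ∈ ℤⁿ, and let Λ_u be the R-submodule of K^d generated by z^{-u₁}f₁, …, z^{-uₙ}fₙ. Fix i with f_i ≠ 0. Then max{μ ∈ ℤ : z^{-μ} f_i ∈ Λ_u} exists and equals the minimum, over all (d−1)-subsets σ ⊆ {1,…,n}∖{i} such that det M_{σ∪{i}} ≠ 0, of the maximum, over all j ∉ σ such that det M_{σ∪{j}} ≠ 0, of the integer val(det M_{σ∪{i}}) − val(det M_{σ∪{j}}) + u_j. (This is the coordinate formula identifying the lattice Λ_u in the membrane [M] with the point π_{L_p}(u) of the tropical linear space L_p, where p(ω) = val(det M_ω).) -/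
/- Coordinate formula for the isomorphism between a membrane [M] and the standard
   triangulation of the tropical linear space L_p: for Λ_u = R{z^{-u₁}f₁, …, z^{-uₙ}fₙ}
   and f_i ≠ 0, the maximum max{μ ∈ ℤ : z^{-μ} f_i ∈ Λ_u} equals
   min_{σ : |σ|=d−1, det M_{σ∪{i}} ≠ 0} max_{j ∉ σ, det M_{σ∪{j}} ≠ 0}
     (val det M_{σ∪{i}} − val det M_{σ∪{j}} + u_j). -/

noncomputable section
set_option synthInstance.maxHeartbeats 1000000
set_option maxHeartbeats 1000000

/-- The determinant of the d×d submatrix of `M` on the columns indexed by `ω`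
(`0` if `ω` does not have exactly `d` elements). -/
def subDet {d n : ℕ} (M : Matrix (Fin d) (Fin n) K) (ω : Finset (Fin n)) : K :=
  if h : ω.card = d then
    (M.submatrix id (fun k => ((ω.orderIsoOfFin h) k : Fin n))).det
  else 0

/-! For `σ` with `det M_{σ∪{i}} ≠ 0`, Cramer's rule gives a linear form `x ↦ det (M_σ | x)`
sending `f_j` to `± det M_{σ∪{j}}`. Applying it to `z^{-μ} f_i ∈ Λ_u` and comparing valuations
bounds `μ` by the inner maximum for `σ`. The bound is attained: pick a basis `B` minimizing
`val det M_B - ∑_{b ∈ B} u_b`, expand `f_i` in `B` by Cramer's rule, and take for `m` the largest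
`μ` for which all coefficients of `z^{-μ} f_i` against the generators `z^{-u_b} f_b` are integral.
The generator `b` realizing `m` gives `σ = B \ {b}`, and the minimality of `B` (an exchange
inequality) shows that the inner maximum for this `σ` is exactly `m`. -/

open HahnSeries Finset

lemma Finset.image_update_univ {α β : Type*} [Fintype α] [DecidableEq α] [DecidableEq β]
    {g : α → β} (hg : Function.Injective g) (k : α) (j : β) :
    univ.image (Function.update g k j) = insert j ((univ.image g).erase (g k)) := by
  ext x
  simp only [mem_image, mem_univ, true_and, mem_insert, mem_erase]
  constructor
  · rintro ⟨a, rfl⟩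
    by_cases ha : a = k
    · simp [ha]
    · exact Or.inr ⟨by simpa [ha] using hg.ne ha, a, by simp [ha]⟩
  · rintro (rfl | ⟨hx, a, rfl⟩)
    · exact ⟨k, by simp⟩
    · exact ⟨a, by simp [show a ≠ k by rintro rfl; exact hx rfl]⟩

lemma Matrix.eq_sum_cramer_div_det_smul_col {F ι : Type*} [Field F] [Fintype ι] [DecidableEq ι]
    (A : Matrix ι ι F) (hA : A.det ≠ 0) (b : ι → F) :
    b = ∑ k, (A.cramer b k / A.det) • A.col k := by
  funext r
  have h := congr_fun (Matrix.mulVec_cramer A b) r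
  simp only [Matrix.mulVec, dotProduct, Pi.smul_apply, smul_eq_mul] at h
  simp only [Finset.sum_apply, Pi.smul_apply, smul_eq_mul, Matrix.col_apply, div_mul_eq_mul_div,
    ← Finset.sum_div, mul_comm (A.cramer b _), h]
  field_simp

lemma z_zpow (m : ℤ) : z ^ m = single m (1 : ℂ) :=
  (RatFunc.single_zpow m).symm

lemma orderTop_z_zpow (m : ℤ) : (z ^ m).orderTop = m := by
  rw [z_zpow, orderTop_single one_ne_zero]

lemma mem_Rring_iff {x : K} : x ∈ Rring ↔ 0 ≤ x.orderTop := by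
  constructor
  · rintro ⟨p, rfl⟩
    rw [ofPowerSeries_apply, orderTop_embDomain]
    cases (RingEquiv.symm (toPowerSeries (R := ℂ))) p |>.orderTop <;> simp
  · intro h
    rcases eq_or_ne x 0 with rfl | hx
    · exact zero_mem _
    rw [zero_le_orderTop_iff] at h
    exact ⟨_, LaurentSeries.X_order_mul_powerSeriesPart (Int.toNat_of_nonneg h)⟩

lemma le_orderTop_sum {ι : Type*} (s : Finset ι) (f : ι → K) {ν : WithTop ℤ}
    (h : ∀ j ∈ s, ν ≤ (f j).orderTop) : ν ≤ (∑ j ∈ s, f j).orderTop :=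
  Finset.sum_induction f (fun x => ν ≤ x.orderTop)
    (fun _ _ hx hy => (le_min hx hy).trans min_orderTop_le_orderTop_add) (by simp) h

lemma le_orderTop_of_mem_span {ι V : Type*} [Fintype ι] [AddCommGroup V] [Module K V]
    (φ : V →ₗ[K] K) {v : ι → V} {x : V} (hx : x ∈ Submodule.span Rring (Set.range v))
    {ν : WithTop ℤ} (hν : ∀ j, ν ≤ (φ (v j)).orderTop) : ν ≤ (φ x).orderTop := by
  obtain ⟨c, rfl⟩ := (Submodule.mem_span_range_iff_exists_fun Rring).mp hx
  rw [map_sum]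
  refine le_orderTop_sum _ _ fun j _ => ?_
  rw [Subring.smul_def, map_smul, smul_eq_mul, orderTop_mul]
  simpa using add_le_add (mem_Rring_iff.mp (c j).2) (hν j)

lemma sum_smul_mem_span {ι V : Type*} [AddCommGroup V] [Module K V] (s : Finset ι) (v : ι → V)
    {c : ι → K} (hc : ∀ j ∈ s, 0 ≤ (c j).orderTop) :
    ∑ j ∈ s, c j • v j ∈ Submodule.span Rring (Set.range v) :=
  Submodule.sum_mem _ fun j hj =>
    Submodule.smul_mem _ (⟨c j, mem_Rring_iff.mpr (hc j hj)⟩ : Rring)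
      (Submodule.subset_span ⟨j, rfl⟩)

section Minors

variable {d n : ℕ} (M : Matrix (Fin d) (Fin n) K)

lemma subDet_of_card_ne {ω : Finset (Fin n)} (h : ω.card ≠ d) : subDet M ω = 0 := dif_neg h

lemma card_eq_of_subDet_ne_zero {ω : Finset (Fin n)} (h : subDet M ω ≠ 0) : ω.card = d :=
  not_not.mp (mt (subDet_of_card_ne M) h)

lemma subDet_eq_det {ω : Finset (Fin n)} (h : ω.card = d) :
    subDet M ω = (M.submatrix id (ω.orderEmbOfFin h)).det := dif_pos h

lemma orderTop_det_submatrix (g : Fin d → Fin n) :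
    (M.submatrix id g).det.orderTop = (subDet M (univ.image g)).orderTop := by
  by_cases hg : Function.Injective g
  · have h : (univ.image g).card = d := by simp [card_image_of_injective _ hg]
    set e := (univ.image g).orderEmbOfFin h with he_def
    have he : ∀ k, ∃ l, e l = g k := fun k => by
      rw [← Set.mem_range, range_orderEmbOfFin]; simp
    choose p hp using he
    have hp_inj : Function.Injective p := fun a b hab => hg (by rw [← hp a, ← hp b, hab])
    let π := Equiv.ofBijective p (Finite.injective_iff_bijective.mp hp_inj)
    have hsub : M.submatrix id g = (M.submatrix id e).submatrix id π := by
      ext r k; simp [π, hp]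
    rw [hsub, Matrix.det_permute', subDet_eq_det M h, ← he_def]
    rcases Int.units_eq_one_or (Equiv.Perm.sign π) with hs | hs <;> simp [hs, orderTop_neg]
  · obtain ⟨a, b, hab, hne⟩ : ∃ a b, g a = g b ∧ a ≠ b := by
      simpa [Function.Injective] using hg
    have hcard : (univ.image g).card ≠ d := fun h => by
      have := card_image_iff.mp (h.trans (card_fin d).symm)
      rw [coe_univ, Set.injOn_univ] at this
      exact hg this
    rw [Matrix.det_zero_of_column_eq hne (fun r => by simp [hab]), subDet_of_card_ne M hcard]

lemma updateCol_submatrix_col (g : Fin d → Fin n) (k : Fin d) (j : Fin n) :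
    (M.submatrix id g).updateCol k (M.col j) = M.submatrix id (Function.update g k j) := by
  ext r l
  by_cases hl : l = k <;> simp [hl]

lemma orderTop_cramer_col {g : Fin d → Fin n} (hg : Function.Injective g) (k : Fin d) (j : Fin n) :
    (Matrix.cramer (M.submatrix id g) (M.col j) k).orderTop =
      (subDet M (insert j ((univ.image g).erase (g k)))).orderTop := by
  rw [Matrix.cramer_apply, updateCol_submatrix_col, orderTop_det_submatrix,
    Finset.image_update_univ hg]

/-- For `j ∈ σ` both sides are `⊤`: `insert j σ = σ` is too small to have a nonzero `subDet`. -/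
lemma exists_linearMap_orderTop_eq_subDet_insert {i : Fin n} {σ : Finset (Fin n)} (hi : i ∉ σ)
    (hcard : (insert i σ).card = d) :
    ∃ φ : (Fin d → K) →ₗ[K] K, ∀ j, (φ (M.col j)).orderTop = (subDet M (insert j σ)).orderTop := by
  set g := (insert i σ).orderEmbOfFin hcard
  obtain ⟨k, hk⟩ : ∃ k, g k = i := by
    rw [← Set.mem_range, range_orderEmbOfFin]; simp
  refine ⟨(LinearMap.proj k).comp (Matrix.cramer (M.submatrix id g)), fun j => ?_⟩
  have := orderTop_cramer_col M g.injective k j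
  rwa [image_orderEmbOfFin_univ, hk, erase_insert hi] at this

lemma exists_card_eq_subDet_ne_zero (hrank : M.rank = d) :
    ∃ B : Finset (Fin n), B.card = d ∧ subDet M B ≠ 0 := by
  obtain ⟨κ, a, ha, hspan, hli⟩ := exists_linearIndependent' K M.col
  have : Fintype κ := Fintype.ofInjective a ha
  have hκ : Fintype.card κ = d := by
    rw [← finrank_span_eq_card hli, hspan, ← Matrix.rank_eq_finrank_span_cols, hrank]
  set g := a ∘ (Fintype.equivFinOfCardEq hκ).symm
  have hg : Function.Injective g := ha.comp (Equiv.injective _)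
  have hdet : (M.submatrix id g).det ≠ 0 :=
    ((Matrix.isUnit_iff_isUnit_det _).mp (Matrix.linearIndependent_cols_iff_isUnit.mp
      (hli.comp _ (Equiv.injective _)))).ne_zero
  refine ⟨univ.image g, by simp [card_image_of_injective _ hg], ?_⟩
  rw [← orderTop_ne_top, ← orderTop_det_submatrix]
  exact orderTop_ne_top.mpr hdet

lemma exists_col_eq_sum_smul_col {B : Finset (Fin n)} (hB : B.card = d) (hPB : subDet M B ≠ 0)
    (i : Fin n) :
    ∃ c : Fin n → K, M.col i = ∑ b ∈ B, c b • M.col b ∧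
      ∀ b ∈ B, (c b).orderTop + (subDet M B).orderTop =
        (subDet M (insert i (B.erase b))).orderTop := by
  set g := B.orderEmbOfFin hB
  set A := M.submatrix id g
  have hA : A.det = subDet M B := (subDet_eq_det M hB).symm
  refine ⟨Function.extend g (fun k => A.cramer (M.col i) k / A.det) 0, ?_, ?_⟩
  · conv_rhs => rw [← image_orderEmbOfFin_univ B hB]
    rw [sum_image fun a _ b _ h => g.injective h]
    simp only [g.injective.extend_apply]
    exact A.eq_sum_cramer_div_det_smul_col (hA ▸ hPB) (M.col i)
  · intro b hb
    obtain ⟨k, rfl⟩ : ∃ k, g k = b := by rwa [← Set.mem_range, range_orderEmbOfFin]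
    rw [g.injective.extend_apply, ← hA, ← orderTop_mul, div_mul_cancel₀ _ (hA ▸ hPB),
      orderTop_cramer_col M g.injective, image_orderEmbOfFin_univ]

/-- The lattice `Λ_u`. -/
def membraneLattice (u : Fin n → ℤ) : Submodule Rring (Fin d → K) :=
  Submodule.span Rring (Set.range fun j => z ^ (-(u j)) • M.col j)

lemma notMem_of_subDet_insert_ne_zero {σ : Finset (Fin n)} (hσ : σ.card + 1 = d) {j : Fin n}
    (hj : subDet M (insert j σ) ≠ 0) : j ∉ σ := fun hjσ => by
  have := card_eq_of_subDet_ne_zero M hj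
  rw [insert_eq_of_mem hjσ] at this
  omega

lemma le_of_zpow_smul_mem_membraneLattice {u : Fin n → ℤ} {i : Fin n} {σ : Finset (Fin n)}
    (hi : i ∉ σ) (hP : subDet M (insert i σ) ≠ 0) {μ : ℤ}
    (hμ : z ^ (-μ) • M.col i ∈ membraneLattice M u) :
    ∃ j ∉ σ, subDet M (insert j σ) ≠ 0 ∧
      μ ≤ (subDet M (insert i σ)).order - (subDet M (insert j σ)).order + u j := by
  have hcard := card_eq_of_subDet_ne_zero M hP
  obtain ⟨φ, hφ⟩ := exists_linearMap_orderTop_eq_subDet_insert M hi hcard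
  rw [card_insert_of_notMem hi] at hcard
  by_contra! hlt
  have hbound : ∀ j, (((subDet M (insert i σ)).order - μ + 1 : ℤ) : WithTop ℤ) ≤
      (φ (z ^ (-(u j)) • M.col j)).orderTop := by
    intro j
    rw [map_smul, smul_eq_mul, orderTop_mul, orderTop_z_zpow, hφ]
    by_cases hj : subDet M (insert j σ) = 0
    · simp [hj]
    rw [← order_eq_orderTop_of_ne_zero hj]
    have := hlt j (notMem_of_subDet_insert_ne_zero M hcard hj) hj
    norm_cast
    omega
  have := le_orderTop_of_mem_span φ hμ hbound
  rw [map_smul, smul_eq_mul, orderTop_mul, orderTop_z_zpow, hφ,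
    ← order_eq_orderTop_of_ne_zero hP] at this
  norm_cast at this
  omega

lemma exists_zpow_smul_mem_membraneLattice {B : Finset (Fin n)} (hB : B.card = d)
    (hPB : subDet M B ≠ 0) (u : Fin n → ℤ) {i : Fin n} (hfi : M.col i ≠ 0) :
    ∃ b ∈ B, subDet M (insert i (B.erase b)) ≠ 0 ∧
      z ^ (-((subDet M (insert i (B.erase b))).order - (subDet M B).order + u b)) • M.col i ∈
        membraneLattice M u := by
  obtain ⟨c, hsum, hc⟩ := exists_col_eq_sum_smul_col M hB hPB i
  obtain ⟨b₀, hb₀, hcb₀⟩ : ∃ b ∈ B, c b ≠ 0 := by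
    by_contra! h
    exact hfi (by rw [hsum]; exact sum_eq_zero fun b hb => by funext r; simp [h b hb])
  obtain ⟨b, hb, hmin⟩ := B.exists_min_image (fun b => (c b).orderTop + u b) ⟨b₀, hb₀⟩
  have hcb : c b ≠ 0 := by
    intro h0
    exact hcb₀ (by simpa [h0] using hmin b₀ hb₀)
  have hPi : subDet M (insert i (B.erase b)) ≠ 0 := by
    rw [← orderTop_ne_top, ← hc b hb]
    simp [hcb, hPB]
  refine ⟨b, hb, hPi, ?_⟩
  set m := (subDet M (insert i (B.erase b))).order - (subDet M B).order + u b
  have hm : (m : WithTop ℤ) = (c b).orderTop + u b := by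
    have := hc b hb
    rw [← order_eq_orderTop_of_ne_zero hcb, ← order_eq_orderTop_of_ne_zero hPB,
      ← order_eq_orderTop_of_ne_zero hPi] at this
    rw [← order_eq_orderTop_of_ne_zero hcb]
    norm_cast at this ⊢
    omega
  have hz : (z : K) ≠ 0 := single_ne_zero one_ne_zero
  have hrepr : z ^ (-m) • M.col i =
      ∑ b' ∈ B, (z ^ (-m) * c b' * z ^ u b') • (z ^ (-(u b')) • M.col b') := by
    rw [hsum, smul_sum]
    refine sum_congr rfl fun b' _ => ?_
    rw [smul_smul, smul_smul, mul_assoc _ (z ^ u b'), ← zpow_add₀ hz, add_neg_cancel, zpow_zero,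
      mul_one]
  rw [hrepr]
  refine sum_smul_mem_span B (fun j => z ^ (-(u j)) • M.col j) fun b' hb' => ?_
  rw [orderTop_mul, orderTop_mul, orderTop_z_zpow, orderTop_z_zpow, add_assoc]
  calc (0 : WithTop ℤ) = ((-m : ℤ) : WithTop ℤ) + m := by norm_cast; omega
    _ ≤ _ := by rw [hm]; exact add_le_add le_rfl (hmin b' hb')

lemma exists_subDet_ne_zero_minimizing (hrank : M.rank = d) (u : Fin n → ℤ) :
    ∃ B : Finset (Fin n), B.card = d ∧ subDet M B ≠ 0 ∧
      ∀ B' : Finset (Fin n), B'.card = d → subDet M B' ≠ 0 →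
        (subDet M B).order - ∑ b ∈ B, u b ≤ (subDet M B').order - ∑ b ∈ B', u b := by
  classical
  obtain ⟨B₀, hB₀⟩ := exists_card_eq_subDet_ne_zero M hrank
  obtain ⟨B, hB, hmin⟩ :=
    (univ.filter fun B : Finset (Fin n) => B.card = d ∧ subDet M B ≠ 0).exists_min_image
      (fun B => (subDet M B).order - ∑ b ∈ B, u b) ⟨B₀, by simpa using hB₀⟩
  simp only [mem_filter, mem_univ, true_and] at hB hmin
  exact ⟨B, hB.1, hB.2, fun B' h₁ h₂ => hmin B' ⟨h₁, h₂⟩⟩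

lemma sub_order_subDet_le_of_minimizing {u : Fin n → ℤ} {B : Finset (Fin n)}
    (hmin : ∀ B' : Finset (Fin n), B'.card = d → subDet M B' ≠ 0 →
      (subDet M B).order - ∑ b ∈ B, u b ≤ (subDet M B').order - ∑ b ∈ B', u b)
    {b j : Fin n} (hb : b ∈ B) (hj : j ∉ B.erase b) (hP : subDet M (insert j (B.erase b)) ≠ 0) :
    u j - (subDet M (insert j (B.erase b))).order ≤ u b - (subDet M B).order := by
  have := hmin _ (card_eq_of_subDet_ne_zero M hP) hP
  rw [sum_insert hj, ← add_sum_erase B u hb] at this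
  omega

end Minors

theorem membrane_coordinate_formula {d n : ℕ}
    (M : Matrix (Fin d) (Fin n) K) (hrank : M.rank = d)
    (u : Fin n → ℤ) (i : Fin n) (hfi : (fun r => M r i) ≠ 0) :
    ∃ m : ℤ,
      IsGreatest {μ : ℤ | z ^ (-μ) • (fun r => M r i) ∈
        Submodule.span Rring (Set.range fun j : Fin n =>
          z ^ (-(u j)) • fun r => M r j)} m ∧
      IsLeast {y : ℤ | ∃ σ : Finset (Fin n), σ.card = d - 1 ∧ i ∉ σ ∧
        subDet M (insert i σ) ≠ 0 ∧
        IsGreatest {t : ℤ | ∃ j : Fin n, j ∉ σ ∧ subDet M (insert j σ) ≠ 0 ∧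
          t = (subDet M (insert i σ)).order - (subDet M (insert j σ)).order + u j} y} m := by
  obtain ⟨B, hB, hPB, hmin⟩ := exists_subDet_ne_zero_minimizing M hrank u
  obtain ⟨b, hb, hPi, hmem⟩ := exists_zpow_smul_mem_membraneLattice M hB hPB u hfi
  set σ := B.erase b with hσ_def
  have hσ : σ.card + 1 = d := by
    have := card_pos.mpr ⟨b, hb⟩
    rw [card_erase_of_mem hb]
    omega
  have hiσ : i ∉ σ := notMem_of_subDet_insert_ne_zero M hσ hPi
  have hbound : ∀ j ∉ σ, subDet M (insert j σ) ≠ 0 →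
      (subDet M (insert i σ)).order - (subDet M (insert j σ)).order + u j ≤
        (subDet M (insert i σ)).order - (subDet M B).order + u b := fun j hj hPj => by
    have := sub_order_subDet_le_of_minimizing M hmin hb hj hPj
    rw [← hσ_def] at this
    omega
  refine ⟨_, ⟨hmem, fun μ hμ => ?_⟩, ⟨σ, by omega, hiσ, hPi, ?_, ?_⟩, ?_⟩
  · obtain ⟨j, hj, hPj, hle⟩ := le_of_zpow_smul_mem_membraneLattice M hiσ hPi hμ
    exact hle.trans (hbound j hj hPj)
  · exact ⟨b, notMem_erase b B, by rwa [insert_erase hb], by rw [insert_erase hb]⟩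
  · rintro t ⟨j, hj, hPj, rfl⟩
    exact hbound j hj hPj
  · rintro y ⟨σ', -, hiσ', hPσ', -, hy⟩
    obtain ⟨j, hj, hPj, hle⟩ := le_of_zpow_smul_mem_membraneLattice M hiσ' hPσ' hmem
    exact hle.trans (hy ⟨j, hj, hPj, rfl⟩)
end
end
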